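/- arXiv:1806.04267 — 5 statements merged into one kernel-verified Lean document; each statement's English description precedes it below -/
import Mathlib

section
/- Let α be an irrational real number, q ≥ 2 an integer, k ≥ 1 an integer, and for each 0 ≤ j < k let (u_j, v_j) be a nonempty open interval contained in [0,1). Then the lower limit, as N → ∞, of (1/N²)·#{ (n,m) ∈ ℕ² : m ≥ 1, n + (k−1)m < N, and for every 0 ≤ j < k the fractional part of α·s_q(n + jm) lies in (u_j, v_j) } is strictly positive. In particular such an arithmetic progression n, n+m, …, n+(k−1)m exists. -/
/-!
Fix `x, y < q ^ T` and put `n = x + q ^ T n'`, `m = y + q ^ T m'`, where in base `B = q ^ W`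
the number `m'` has digits `1, 1, …, 1` and `n'` has digits `0, q ^ L₀ - 1, …, q ^ L_{k-1} - k`.
For `j ≤ k` the `B`-blocks of `n + j m` do not interact, and the block `q ^ Lᵢ - (i + 1) + j` has
digit sum `s_q (j - i - 1) + 1` if `i < j` but `Lᵢ (q - 1) - s_q (i - j)` if `i ≥ j`. Hence
`α s_q (n + j m) = C_j + (q - 1) α (L_j + ⋯ + L_{k-1})` with `C_j` independent of the `Lᵢ`.
As `(q - 1) α` is irrational, its multiples enter any interval mod 1 within a bounded number of
steps, so `L_{k-1}, …, L₀` can be chosen in turn, from a bounded range, to place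
`α s_q (n + j m)` in `(u_j, v_j)`. This yields `q ^ (2T)` good pairs below `q ^ (T + P)` with `P`
independent of `T`, i.e. density at least `q ^ (-2P-2)`.
-/

open Finset Complex

noncomputable section

/-- A sequence is `q`-multiplicative if `f (m + n) = f m * f n` whenever
`m < q ^ t` and `q ^ t ∣ n`. -/
def QMult (q : ℕ) (f : ℕ → ℂ) : Prop :=
  ∀ t m n : ℕ, m < q ^ t → q ^ t ∣ n → f (m + n) = f m * f n

/-- `e x = exp (2 π i x)`. -/
def e (x : ℝ) : ℂ := Complex.exp (2 * Real.pi * Complex.I * x)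

/-- The weight `|ω|` of `ω ∈ {0,1}^s`: the number of coordinates equal to `1`. -/
def wt {s : ℕ} (ω : Fin s → Bool) : ℕ := (Finset.univ.filter fun i => ω i = true).card

/-- The vertex `n₀ + ω₁ n₁ + ⋯ + ω_s n_s` of a parallelepiped. -/
def vertex (s : ℕ) (n : Fin (s + 1) → ℤ) (ω : Fin s → Bool) : ℤ :=
  n 0 + ∑ i : Fin s, if ω i then n i.succ else 0

/-- The set `Π_s(N)` of (s+1)-tuples all of whose associated vertices lie in `[0, N)`.
(Any such tuple automatically has all entries in `[-N, N]`.) -/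
def PiSet (s N : ℕ) : Finset (Fin (s + 1) → ℤ) :=
  (Finset.Icc (fun _ => -(N : ℤ)) fun _ => (N : ℤ)).filter fun n =>
    ∀ ω : Fin s → Bool, 0 ≤ vertex s n ω ∧ vertex s n ω < N

/-- The Gowers product `∏_ω conj^{|ω|} f(n₀ + ω·n)`. -/
def gowersTerm (s : ℕ) (f : ℕ → ℂ) (n : Fin (s + 1) → ℤ) : ℂ :=
  ∏ ω : Fin s → Bool, (starRingEnd ℂ)^[wt ω] (f (vertex s n ω).toNat)

/-- The Gowers average `‖f‖_{U^s[N]}^{2^s}` (as a complex number; it is in fact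
real and nonnegative). -/
def gowersAvg (s N : ℕ) (f : ℕ → ℂ) : ℂ :=
  (∑ n ∈ PiSet s N, gowersTerm s f n) / (PiSet s N).card

/-- The Gowers uniformity norm `‖f‖_{U^s[N]}`. -/
def gowersNorm (s N : ℕ) (f : ℕ → ℂ) : ℝ :=
  (gowersAvg s N f).re ^ ((1 : ℝ) / 2 ^ s)

/-- Sum of digits of `n` in base `q`. -/
def digitSum (q n : ℕ) : ℕ := (Nat.digits q n).sum

end

open Filter

section DigitSum

variable {q : ℕ}

lemma digitSum_add_pow_mul (hq : 2 ≤ q) {t a : ℕ} (ha : a < q ^ t) (b : ℕ) :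
    digitSum q (a + q ^ t * b) = digitSum q a + digitSum q b := by
  rcases Nat.eq_zero_or_pos b with rfl | hb
  · simp [digitSum]
  have hlen := (Nat.digits_length_le_iff hq a).2 ha
  rw [digitSum, ← Nat.add_sub_cancel' hlen, ← Nat.digits_append_zeroes_append_digits hq hb]
  simp [digitSum]

lemma digitSum_of_lt {d : ℕ} (hd : d < q) : digitSum q d = d := by
  rcases Nat.eq_zero_or_pos d with rfl | hd0
  · simp [digitSum]
  · simp [digitSum, Nat.digits_of_lt q d hd0.ne' hd]

lemma digitSum_add_mul (hq : 2 ≤ q) {d : ℕ} (hd : d < q) (b : ℕ) :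
    digitSum q (d + q * b) = d + digitSum q b := by
  have h := digitSum_add_pow_mul hq (t := 1) (by rwa [pow_one]) b
  rwa [pow_one, digitSum_of_lt hd] at h

lemma digitSum_pow_add (hq : 2 ≤ q) {L r : ℕ} (hr : r < q ^ L) :
    digitSum q (q ^ L + r) = digitSum q r + 1 := by
  rw [add_comm, ← mul_one (q ^ L), digitSum_add_pow_mul hq hr, digitSum_of_lt (d := 1) (by omega)]

lemma digitSum_add_digitSum_pow_sub_one_sub (hq : 2 ≤ q) (L : ℕ) {a : ℕ} (ha : a < q ^ L) :
    digitSum q a + digitSum q (q ^ L - 1 - a) = L * (q - 1) := by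
  induction L generalizing a with
  | zero => simp_all [digitSum]
  | succ L ih =>
    have hd : a % q < q := Nat.mod_lt a (by omega)
    have haq : a / q < q ^ L := Nat.div_lt_of_lt_mul (by rwa [← pow_succ'])
    obtain ⟨r, hr⟩ : ∃ r, q ^ L = a / q + 1 + r := ⟨q ^ L - (a / q + 1), by omega⟩
    have hcompl : q ^ (L + 1) - 1 - a = (q - 1 - a % q) + q * (q ^ L - 1 - a / q) := by
      have := Nat.mod_add_div a q
      rw [pow_succ', hr, show a / q + 1 + r - 1 - a / q = r by omega, mul_add, mul_add, mul_one]
      omega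
    have hsplit : digitSum q a = a % q + digitSum q (a / q) := by
      conv_lhs => rw [← Nat.mod_add_div a q]
      exact digitSum_add_mul hq hd _
    rw [hcompl, hsplit, digitSum_add_mul hq (by omega), add_one_mul]
    have := ih haq
    omega

lemma sum_mul_pow_lt {B r : ℕ} {y : ℕ → ℕ} (hy : ∀ i < r, y i < B) :
    ∑ i ∈ range r, y i * B ^ i < B ^ r := by
  induction r with
  | zero => simp
  | succ r ih =>
    rw [sum_range_succ, mul_comm (y r), pow_succ]
    exact Nat.add_mul_lt_mul_of_lt_of_lt (ih fun i hi => hy i (by omega)) (hy r (by omega))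

lemma digitSum_sum_mul_pow (hq : 2 ≤ q) {W r : ℕ} {y : ℕ → ℕ} (hy : ∀ i < r, y i < q ^ W) :
    digitSum q (∑ i ∈ range r, y i * (q ^ W) ^ i) = ∑ i ∈ range r, digitSum q (y i) := by
  induction r with
  | zero => simp [digitSum]
  | succ r ih =>
    have hlt : ∑ i ∈ range r, y i * (q ^ W) ^ i < q ^ (W * r) := by
      rw [pow_mul]; exact sum_mul_pow_lt fun i hi => hy i (by omega)
    rw [sum_range_succ, sum_range_succ, mul_comm (y r), ← pow_mul,
      digitSum_add_pow_mul hq hlt, ih fun i hi => hy i (by omega)]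

lemma digitSum_pow_sub_add (hq : 2 ≤ q) {L i j : ℕ} (hi : i < q ^ L) (hj : j ≤ q ^ L) :
    (digitSum q (q ^ L - (i + 1) + j) : ℤ) =
      if i < j then (digitSum q (j - (i + 1)) : ℤ) + 1
      else (L : ℤ) * (q - 1) - digitSum q (i - j) := by
  split_ifs with hij
  · rw [show q ^ L - (i + 1) + j = q ^ L + (j - (i + 1)) by omega,
      digitSum_pow_add hq (by omega)]
    norm_cast
  · rw [show q ^ L - (i + 1) + j = q ^ L - 1 - (i - j) by omega]
    have h := congrArg (Nat.cast : ℕ → ℤ)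
      (digitSum_add_digitSum_pow_sub_one_sub hq L (a := i - j) (by omega))
    push_cast [Nat.cast_sub (by omega : 1 ≤ q)] at h
    linarith

end DigitSum

def progStart (q T W k x : ℕ) (L : ℕ → ℕ) : ℕ :=
  x + q ^ T * (q ^ W * ∑ i ∈ range k, (q ^ L i - (i + 1)) * (q ^ W) ^ i)

def progStep (q T W k y : ℕ) : ℕ :=
  y + q ^ T * (1 + q ^ W * ∑ i ∈ range k, (q ^ W) ^ i)

lemma progStart_add_mul_progStep (q T W k x y j : ℕ) (L : ℕ → ℕ) :
    progStart q T W k x L + j * progStep q T W k y =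
      (x + j * y) % q ^ T + q ^ T * ((x + j * y) / q ^ T + j +
        q ^ W * ∑ i ∈ range k, (q ^ L i - (i + 1) + j) * (q ^ W) ^ i) := by
  have h := Nat.mod_add_div (x + j * y) (q ^ T)
  simp only [progStart, progStep, add_mul, sum_add_distrib, ← mul_sum]
  linarith

section Progression

variable {q Λ R T k x y : ℕ}

lemma pow_bounds_of_mem_Icc (hq : 2 ≤ q) (hkΛ : k < q ^ Λ) {L : ℕ} (hL : L ∈ Icc Λ (Λ + R)) :
    k < q ^ L ∧ q ^ L + k < q ^ (Λ + R + 1) := by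
  have h1 := Nat.pow_le_pow_right (by omega : 0 < q) (mem_Icc.1 hL).1
  have h2 := Nat.pow_le_pow_right (by omega : 0 < q) (mem_Icc.1 hL).2
  have h3 := Nat.pow_le_pow_right (by omega : 0 < q) (le_self_add : Λ ≤ Λ + R)
  rw [pow_succ]
  constructor <;> nlinarith

lemma add_mul_div_le_of_lt {M : ℕ} (hx : x < M) (hy : y < M) (j : ℕ) : (x + j * y) / M ≤ j :=
  Nat.lt_succ_iff.1 (Nat.div_lt_of_lt_mul (by nlinarith))

lemma digits_progStart_add_mul_progStep_lt (hq : 2 ≤ q) (hkΛ : k < q ^ Λ) (hx : x < q ^ T)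
    (hy : y < q ^ T) {L : ℕ → ℕ} (hL : ∀ i < k, L i ∈ Icc Λ (Λ + R)) {j : ℕ} (hj : j ≤ k) :
    (x + j * y) / q ^ T + j < q ^ (Λ + R + 1) ∧
      ∀ i < k, q ^ L i - (i + 1) + j < q ^ (Λ + R + 1) := by
  refine ⟨?_, fun i hi => ?_⟩
  · have := (pow_bounds_of_mem_Icc hq hkΛ (left_mem_Icc.2 (le_self_add : Λ ≤ Λ + R))).2
    have := add_mul_div_le_of_lt hx hy j
    omega
  · have := (pow_bounds_of_mem_Icc hq hkΛ (hL i hi)).2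
    omega

lemma exists_digitSum_progStart_add_mul_progStep (hq : 2 ≤ q) (hkΛ : k < q ^ Λ)
    (hx : x < q ^ T) (hy : y < q ^ T) :
    ∃ D : ℕ → ℤ, ∀ L : ℕ → ℕ, (∀ i < k, L i ∈ Icc Λ (Λ + R)) → ∀ j ≤ k,
      (digitSum q (progStart q T (Λ + R + 1) k x L + j * progStep q T (Λ + R + 1) k y) : ℤ) =
        D j + ((q - 1) * ∑ i ∈ Ico j k, L i : ℕ) := by
  refine ⟨fun j => digitSum q ((x + j * y) % q ^ T) + digitSum q ((x + j * y) / q ^ T + j) +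
    ∑ i ∈ range j, ((digitSum q (j - (i + 1)) : ℤ) + 1) - ∑ i ∈ Ico j k, (digitSum q (i - j) : ℤ),
    fun L hL j hj => ?_⟩
  have hLk : ∀ i < k, k < q ^ L i := fun i hi => (pow_bounds_of_mem_Icc hq hkΛ (hL i hi)).1
  obtain ⟨hcarry, hblock⟩ := digits_progStart_add_mul_progStep_lt hq hkΛ hx hy hL hj
  rw [progStart_add_mul_progStep, digitSum_add_pow_mul hq (Nat.mod_lt _ (by positivity)),
    digitSum_add_pow_mul hq hcarry, digitSum_sum_mul_pow hq hblock]
  push_cast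
  rw [sum_congr rfl fun i hi => digitSum_pow_sub_add hq (j := j)
    ((mem_range.1 hi).trans (hLk i (mem_range.1 hi))) (hj.trans (hLk i (mem_range.1 hi)).le),
    ← sum_range_add_sum_Ico _ hj, sum_congr rfl fun i hi => if_pos (mem_range.1 hi),
    sum_congr rfl fun i hi => if_neg (not_lt.2 (mem_Ico.1 hi).1), sum_sub_distrib, ← sum_mul,
    Nat.cast_sub (by omega : 1 ≤ q)]
  push_cast
  ring

lemma progStart_add_mul_progStep_lt (hq : 2 ≤ q) (hkΛ : k < q ^ Λ) (hx : x < q ^ T)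
    (hy : y < q ^ T) {L : ℕ → ℕ} (hL : ∀ i < k, L i ∈ Icc Λ (Λ + R)) {j : ℕ} (hj : j ≤ k) :
    progStart q T (Λ + R + 1) k x L + j * progStep q T (Λ + R + 1) k y <
      q ^ (T + (Λ + R + 1) * (k + 1)) := by
  obtain ⟨hcarry, hblock⟩ := digits_progStart_add_mul_progStep_lt hq hkΛ hx hy hL hj
  rw [progStart_add_mul_progStep,
    show q ^ (T + (Λ + R + 1) * (k + 1)) =
      q ^ T * (q ^ (Λ + R + 1) * (q ^ (Λ + R + 1)) ^ k) by ring]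
  exact Nat.add_mul_lt_mul_of_lt_of_lt (Nat.mod_lt _ (by positivity))
    (Nat.add_mul_lt_mul_of_lt_of_lt hcarry (sum_mul_pow_lt hblock))

lemma progStep_lt {W : ℕ} (hq : 2 ≤ q) (hW : 0 < W) (hy : y < q ^ T) :
    progStep q T W k y < q ^ (T + W * (k + 1)) := by
  have hqW : 1 < q ^ W := Nat.one_lt_pow hW.ne' (by omega)
  have hsum := sum_mul_pow_lt (r := k) (y := fun _ => 1) fun _ _ => hqW
  simp only [one_mul] at hsum
  rw [progStep, show q ^ (T + W * (k + 1)) = q ^ T * (q ^ W * (q ^ W) ^ k) by ring]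
  exact Nat.add_mul_lt_mul_of_lt_of_lt hy (Nat.add_mul_lt_mul_of_lt_of_lt hqW hsum)

end Progression

section Rotation

lemma exists_nat_le_add_mul_mem_Ioo {a b δ x D : ℝ} (hδ : 0 < δ) (hδab : δ < b - a) (hx : x ≤ a)
    (hD : a - x ≤ D) : ∃ t : ℕ, t ≤ ⌊D / δ⌋₊ + 1 ∧ x + t * δ ∈ Set.Ioo a b := by
  have hfloor := Nat.floor_le (div_nonneg (sub_nonneg.2 hx) hδ.le)
  have hlt := Nat.lt_floor_add_one ((a - x) / δ)
  rw [le_div_iff₀ hδ] at hfloor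
  rw [div_lt_iff₀ hδ] at hlt
  refine ⟨⌊(a - x) / δ⌋₊ + 1, by gcongr, ?_, ?_⟩ <;> push_cast <;> linarith

lemma fract_mem_Ioo_of_sub_intCast_mem {y a b : ℝ} (ha : 0 ≤ a) (hb : b ≤ 1) {z : ℤ}
    (h : y - z ∈ Set.Ioo a b) : Int.fract y ∈ Set.Ioo a b := by
  have hfract : Int.fract y = y - z :=
    Int.fract_eq_iff.2 ⟨by linarith [h.1], by linarith [h.2], z, by ring⟩
  rwa [hfract]

lemma exists_le_fract_add_mul_mem_Ioo {a b δ : ℝ} (ha : 0 ≤ a) (hb : b ≤ 1) (hδ : δ ≠ 0)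
    (hδab : |δ| < b - a) (c : ℝ) :
    ∃ t : ℕ, t ≤ ⌊2 / |δ|⌋₊ + 1 ∧ Int.fract (c + t * δ) ∈ Set.Ioo a b := by
  have h0 := Int.fract_nonneg c
  have h1 := Int.fract_lt_one c
  have hc := Int.self_sub_floor c
  rcases hδ.lt_or_gt with hneg | hpos
  · rw [abs_of_neg hneg] at hδab ⊢
    obtain ⟨t, ht, hmem⟩ := exists_nat_le_add_mul_mem_Ioo (a := -b) (b := -a)
      (x := -(Int.fract c + 1)) (D := 2) (neg_pos.2 hneg) (by linarith) (by linarith) (by linarith)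
    refine ⟨t, ht, fract_mem_Ioo_of_sub_intCast_mem ha hb (z := ⌊c⌋ - 1) ?_⟩
    push_cast
    constructor <;> linarith [hmem.1, hmem.2]
  · rw [abs_of_pos hpos] at hδab ⊢
    obtain ⟨t, ht, hmem⟩ := exists_nat_le_add_mul_mem_Ioo (x := Int.fract c - 1) (D := 2)
      hpos hδab (by linarith) (by linarith)
    refine ⟨t, ht, fract_mem_Ioo_of_sub_intCast_mem ha hb (z := ⌊c⌋ + 1) ?_⟩
    push_cast
    constructor <;> linarith [hmem.1, hmem.2]

lemma Irrational.eventually_forall_exists_fract_add_mul_mem_Ioo {θ a b : ℝ} (hθ : Irrational θ)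
    (ha : 0 ≤ a) (hab : a < b) (hb : b ≤ 1) :
    ∀ᶠ R in atTop, ∀ c : ℝ, ∃ s : ℕ, s ≤ R ∧ Int.fract (c + θ * s) ∈ Set.Ioo a b := by
  obtain ⟨n, hn⟩ := exists_nat_one_div_lt (sub_pos.2 hab)
  obtain ⟨p, hp, -, hδ⟩ := Real.exists_nat_abs_mul_sub_round_le θ n.succ_pos
  set δ := p * θ - round (p * θ)
  have hδ0 : δ ≠ 0 := sub_ne_zero.2 ((hθ.natCast_mul hp.ne').ne_int _)
  have hδab : |δ| < b - a :=
    hδ.trans_lt ((one_div_le_one_div_of_le (by positivity) (by push_cast; linarith)).trans_lt hn)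
  refine eventually_atTop.2 ⟨p * (⌊2 / |δ|⌋₊ + 1), fun R hR c => ?_⟩
  obtain ⟨t, ht, hmem⟩ := exists_le_fract_add_mul_mem_Ioo ha hb hδ0 hδab c
  refine ⟨p * t, (Nat.mul_le_mul_left p ht).trans hR, ?_⟩
  rwa [show c + θ * ↑(p * t) = c + t * δ + ↑((t : ℤ) * round (p * θ)) by push_cast; ring,
    Int.fract_add_intCast]

lemma exists_forall_add_mul_sum_Ico {θ : ℝ} {S : Set ℕ} {P : ℕ → ℝ → Prop} {k : ℕ}
    (hP : ∀ j < k, ∀ c, ∃ t ∈ S, P j (c + θ * t)) (C : ℕ → ℝ) :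
    ∃ L : ℕ → ℕ, (∀ i < k, L i ∈ S) ∧ ∀ j < k, P j (C j + θ * ∑ i ∈ Ico j k, (L i : ℝ)) := by
  induction k generalizing C with
  | zero => exact ⟨fun _ => 0, by simp, by simp⟩
  | succ k ih =>
    obtain ⟨t, htS, ht⟩ := hP k (lt_add_one k) (C k)
    obtain ⟨L, hLS, hL⟩ := ih (fun j hj => hP j (by omega)) fun j => C j + θ * t
    have hsum : ∀ j ≤ k, ∑ i ∈ Ico j (k + 1), (Function.update L k t i : ℝ) =
        ∑ i ∈ Ico j k, (L i : ℝ) + t := fun j hj => by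
      rw [sum_Ico_succ_top hj, Function.update_self]
      congr 1
      exact sum_congr rfl fun i hi => by rw [Function.update_of_ne (mem_Ico.1 hi).2.ne]
    refine ⟨Function.update L k t, fun i hi => ?_, fun j hj => ?_⟩
    · rcases (Nat.lt_succ_iff.1 hi).lt_or_eq with hik | rfl
      · rw [Function.update_of_ne hik.ne]; exact hLS i hik
      · rwa [Function.update_self]
    · rw [hsum j (by omega)]
      rcases (Nat.lt_succ_iff.1 hj).lt_or_eq with hjk | rfl
      · convert hL j hjk using 1; ring
      · simpa using ht

end Rotation

lemma mul_self_le_card_of_forall_exists_mod_eq {s : Finset (ℕ × ℕ)} {M : ℕ}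
    (h : ∀ x < M, ∀ y < M, ∃ nm ∈ s, nm.1 % M = x ∧ nm.2 % M = y) : M * M ≤ #s := by
  have hsurj : Set.SurjOn (fun nm : ℕ × ℕ => (nm.1 % M, nm.2 % M)) s
      ((range M ×ˢ range M : Finset (ℕ × ℕ)) : Set (ℕ × ℕ)) := by
    rintro ⟨x, y⟩ hxy
    simp only [coe_product, coe_range, Set.mem_prod, Set.mem_Iio] at hxy
    obtain ⟨nm, hnm, hx, hy⟩ := h x hxy.1 y hxy.2
    exact ⟨nm, hnm, by simp [hx, hy]⟩
  simpa using card_le_card_of_surjOn _ hsurj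

lemma liminf_card_div_sq_pos {G : ℕ → Finset (ℕ × ℕ)} (hG : ∀ N, G N ⊆ range N ×ˢ range N)
    {b P : ℕ} (hb : 2 ≤ b) (hP : ∀ T N, b ^ (T + P) ≤ N → b ^ T * b ^ T ≤ #(G N)) :
    0 < atTop.liminf fun N => (#(G N) : ℝ) / N ^ 2 := by
  have hle : ∀ N, (#(G N) : ℝ) / N ^ 2 ≤ 1 := fun N => by
    rcases N.eq_zero_or_pos with rfl | hN
    · simp
    have hcard := card_le_card (hG N)
    rw [card_product, card_range] at hcard
    rw [div_le_one (by positivity)]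
    exact_mod_cast (by nlinarith : #(G N) ≤ N ^ 2)
  have hlow : ∀ N, b ^ P ≤ N → (1 : ℝ) / b ^ (2 * P + 2) ≤ #(G N) / N ^ 2 := fun N hN => by
    have hN0 : N ≠ 0 := ((pow_pos (by omega : 0 < b) P).trans_le hN).ne'
    have hPlog : P ≤ Nat.log b N := Nat.le_log_of_pow_le (by omega) hN
    set T := Nat.log b N - P
    have hTP : T + P = Nat.log b N := by omega
    have hcard := hP T N (hTP ▸ Nat.pow_log_le_self b hN0)
    have hNlt : N < b ^ (T + P + 1) := hTP ▸ Nat.lt_pow_succ_log_self (by omega) N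
    rw [div_le_div_iff₀ (by positivity) (by positivity), one_mul]
    calc (N : ℝ) ^ 2 ≤ ((b : ℝ) ^ (T + P + 1)) ^ 2 := by gcongr; exact_mod_cast hNlt.le
      _ = (b : ℝ) ^ T * b ^ T * b ^ (2 * P + 2) := by ring
      _ ≤ (#(G N) : ℝ) * b ^ (2 * P + 2) := by gcongr; exact_mod_cast hcard
  exact (by positivity : (0 : ℝ) < 1 / b ^ (2 * P + 2)).trans_le
    (le_liminf_of_le (isCoboundedUnder_ge_of_le atTop hle) (eventually_atTop.2 ⟨_, hlow⟩))

noncomputable def goodPairs (α : ℝ) (q k : ℕ) (u v : ℕ → ℝ) (N : ℕ) : Finset (ℕ × ℕ) :=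
  (range N ×ˢ range N).filter fun nm : ℕ × ℕ =>
    1 ≤ nm.2 ∧ nm.1 + (k - 1) * nm.2 < N ∧
      ∀ j < k, Int.fract (α * digitSum q (nm.1 + j * nm.2)) ∈ Set.Ioo (u j) (v j)

lemma exists_mem_goodPairs_mod_eq {α : ℝ} (hα : Irrational α) {q : ℕ} (hq : 2 ≤ q) {k : ℕ}
    {u v : ℕ → ℝ} (huv : ∀ j < k, 0 ≤ u j ∧ u j < v j ∧ v j ≤ 1) :
    ∃ P, ∀ T N, q ^ (T + P) ≤ N → ∀ x < q ^ T, ∀ y < q ^ T,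
      ∃ nm ∈ goodPairs α q k u v N, nm.1 % q ^ T = x ∧ nm.2 % q ^ T = y := by
  set θ := ((q - 1 : ℕ) : ℝ) * α
  have hθ : Irrational θ := hα.natCast_mul (by omega)
  obtain ⟨R, hR⟩ := ((eventually_all_finset (range k)).2 fun j hj =>
    have huvj := huv j (mem_range.1 hj)
    hθ.eventually_forall_exists_fract_add_mul_mem_Ioo huvj.1 huvj.2.1 huvj.2.2).exists
  have hkq : k < q ^ k := Nat.lt_pow_self (by omega)
  refine ⟨(k + R + 1) * (k + 1), fun T N hN x hx y hy => ?_⟩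
  obtain ⟨D, hD⟩ := exists_digitSum_progStart_add_mul_progStep (R := R) hq hkq hx hy
  have hshift : ∀ j < k, ∀ c, ∃ t ∈ Icc k (k + R),
      Int.fract (c + θ * t) ∈ Set.Ioo (u j) (v j) := by
    intro j hj c
    obtain ⟨s, hs, hmem⟩ := hR j (mem_range.2 hj) (c + θ * k)
    exact ⟨k + s, mem_Icc.2 ⟨by omega, by omega⟩, by push_cast; rwa [mul_add, ← add_assoc]⟩
  obtain ⟨L, hLS, hL⟩ := exists_forall_add_mul_sum_Ico
    (P := fun j r => Int.fract r ∈ Set.Ioo (u j) (v j)) hshift fun j => α * D j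
  have hlt : ∀ j ≤ k, progStart q T (k + R + 1) k x L + j * progStep q T (k + R + 1) k y < N :=
    fun j hj => (progStart_add_mul_progStep_lt hq hkq hx hy hLS hj).trans_le hN
  refine ⟨(progStart q T (k + R + 1) k x L, progStep q T (k + R + 1) k y), ?_, ?_, ?_⟩
  · simp only [goodPairs, mem_filter, mem_product, mem_range]
    refine ⟨⟨by simpa using hlt 0 (Nat.zero_le k), (progStep_lt hq (by omega) hy).trans_le hN⟩,
      ?_, hlt (k - 1) (Nat.sub_le k 1), fun j hj => ?_⟩
    · have : 0 < q ^ T * (1 + q ^ (k + R + 1) * ∑ i ∈ range k, (q ^ (k + R + 1)) ^ i) := by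
        positivity
      simp only [progStep]
      omega
    · have h := congrArg (Int.cast : ℤ → ℝ) (hD L hLS j hj.le)
      push_cast at h
      convert hL j hj using 2
      rw [h]
      ring
  · simp [progStart, Nat.add_mul_mod_self_left, Nat.mod_eq_of_lt hx]
  · simp [progStep, Nat.add_mul_mod_self_left, Nat.mod_eq_of_lt hy]

theorem stmt4_general (α : ℝ) (hα : Irrational α) (q : ℕ) (hq : 2 ≤ q) (k : ℕ)
    (u v : ℕ → ℝ) (huv : ∀ j < k, 0 ≤ u j ∧ u j < v j ∧ v j ≤ 1) :
    0 < Filter.atTop.liminf (fun N : ℕ =>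
      (((Finset.range N ×ˢ Finset.range N).filter fun nm : ℕ × ℕ =>
          1 ≤ nm.2 ∧ nm.1 + (k - 1) * nm.2 < N ∧
          ∀ j < k, Int.fract (α * digitSum q (nm.1 + j * nm.2)) ∈ Set.Ioo (u j) (v j)).card : ℝ)
        / (N : ℝ) ^ 2) := by
  obtain ⟨P, hP⟩ := exists_mem_goodPairs_mod_eq hα hq huv
  exact liminf_card_div_sq_pos (G := goodPairs α q k u v) (fun N => filter_subset _ _) hq
    fun T N hN => mul_self_le_card_of_forall_exists_mod_eq (hP T N hN)

/-- For irrational `α`, the values `α s_q(n+jm) mod 1` hit any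
prescribed pattern of subintervals of `[0,1)` along arithmetic progressions of
length `k`, with positive density of pairs `(n, m)`. -/
theorem stmt4 (α : ℝ) (hα : Irrational α) (q : ℕ) (hq : 2 ≤ q) (k : ℕ) (hk : 1 ≤ k)
    (u v : ℕ → ℝ) (huv : ∀ j < k, 0 ≤ u j ∧ u j < v j ∧ v j ≤ 1) :
    0 < Filter.atTop.liminf (fun N : ℕ =>
      (((Finset.range N ×ˢ Finset.range N).filter fun nm : ℕ × ℕ =>
          1 ≤ nm.2 ∧ nm.1 + (k - 1) * nm.2 < N ∧
          ∀ j < k, Int.fract (α * digitSum q (nm.1 + j * nm.2)) ∈ Set.Ioo (u j) (v j)).card : ℝ)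
        / (N : ℝ) ^ 2) :=
  stmt4_general α hα q hq k u v huv
end

section
/- Let q ≥ 2 be an integer and let f : ℕ → ℂ be a q-multiplicative sequence with |f(n)| = 1 for all n. Suppose that for every α ∈ ℝ, (1/N)·∑_{n=0}^{N−1} f(n) e(nα) → 0 as N → ∞. Then the convergence is uniform in α, i.e. sup_{α ∈ ℝ} |(1/N)·∑_{n=0}^{N−1} f(n) e(nα)| → 0 as N → ∞. -/
open Finset Complex

/-!
Write `S_N(α) = ∑_{n<N} f(n) e(nα)`. Splitting `[0, N)` into the base-`q` blocks of `N` and using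
`q`-multiplicativity to factor each block sum gives `|S_N(α)| ≤ (q - 1) ∑_{j ≤ log_q N} |S_{q^j}(α)|`,
and the special case `|S_{q^{t+1}}(α)| ≤ q |S_{q^t}(α)|` shows that `|S_{q^t}(α)| / q^t` decreases
in `t`. These functions are continuous and `1`-periodic and tend to `0` pointwise, so by Dini's
theorem their suprema `M_t` tend to `0`. Finally `sup_α |S_N(α)| / N` is bounded by
`(q - 1) ∑_{j ≤ t} M_j q^{j - t}` with `t = log_q N`, a Toeplitz average of a null sequence.
-/

open Filter Topology

lemma Nat.tendsto_log_atTop {b : ℕ} (hb : 1 < b) : Tendsto (Nat.log b) atTop atTop :=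
  tendsto_atTop_atTop_of_monotone Nat.log_monotone fun t => ⟨b ^ t, (Nat.log_pow hb t).ge⟩

lemma tendsto_sum_mul_pow_div_pow {a : ℕ → ℝ} {r : ℝ} (hr : 1 < r)
    (ha : Tendsto a atTop (𝓝 0)) :
    Tendsto (fun t => (∑ j ∈ range (t + 1), a j * r ^ j) / r ^ t) atTop (𝓝 0) := by
  -- Reversed, the sum is the convolution `∑_{k ≤ t} a (t - k) r⁻¹ ^ k` of a null sequence with a
  -- summable one, which tends to `0` by dominated convergence for series (Tannery's theorem).
  obtain ⟨C, hC⟩ := ha.norm.bddAbove_range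
  have hρ : 0 ≤ r⁻¹ := by positivity
  set F : ℕ → ℕ → ℝ := fun t k => if k ≤ t then a (t - k) * r⁻¹ ^ k else 0
  have hF (t : ℕ) : (∑ j ∈ range (t + 1), a j * r ^ j) / r ^ t = ∑' k, F t k := by
    rw [tsum_eq_sum (s := range (t + 1)) fun k hk => if_neg (by simpa using hk), sum_div,
      ← sum_range_reflect]
    refine sum_congr rfl fun k hk => ?_
    have hk : k ≤ t := Nat.lt_succ_iff.1 (mem_range.1 hk)
    rw [if_pos hk, Nat.add_sub_cancel, ← pow_sub_mul_pow r hk, inv_pow]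
    field_simp
  have hlim (k : ℕ) : Tendsto (F · k) atTop (𝓝 0) := by
    have := (ha.comp (tendsto_sub_atTop_nat k)).mul_const (r⁻¹ ^ k)
    rw [zero_mul] at this
    exact this.congr' ((eventually_ge_atTop k).mono fun t ht => (if_pos ht).symm)
  have hbound (t k : ℕ) : ‖F t k‖ ≤ C * r⁻¹ ^ k := by
    simp only [F]
    split_ifs
    · rw [norm_mul, norm_pow, Real.norm_of_nonneg hρ]
      gcongr
      exact hC (Set.mem_range_self _)
    · simp only [norm_zero]
      exact mul_nonneg ((norm_nonneg _).trans (hC (Set.mem_range_self 0))) (by positivity)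
  simp_rw [hF]
  simpa using tendsto_tsum_of_dominated_convergence
    ((summable_geometric_of_lt_one hρ (inv_lt_one_of_one_lt₀ hr)).mul_left C) hlim
    (Eventually.of_forall hbound)

lemma tendsto_iSup_of_antitone_of_periodic {F : ℕ → ℝ → ℝ} {c : ℝ} (hc : 0 < c)
    (hcont : ∀ t, Continuous (F t)) (hper : ∀ t, Function.Periodic (F t) c)
    (hanti : ∀ x, Antitone (F · x)) (hlim : ∀ x, Tendsto (F · x) atTop (𝓝 0)) :
    Tendsto (fun t => ⨆ x, F t x) atTop (𝓝 0) := by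
  have hnonneg (t : ℕ) (x : ℝ) : 0 ≤ F t x :=
    le_of_tendsto (hlim x) ((eventually_ge_atTop t).mono fun _ hs => hanti x hs)
  have hunif : TendstoUniformlyOn F 0 atTop (Set.Icc 0 c) :=
    Antitone.tendstoUniformlyOn_of_forall_tendsto isCompact_Icc (fun t => (hcont t).continuousOn)
      (fun x _ => hanti x) continuousOn_const (fun x _ => hlim x)
  rw [Metric.tendsto_nhds]
  intro ε hε
  filter_upwards [Metric.tendstoUniformlyOn_iff.1 hunif (ε / 2) (half_pos hε)] with t ht
  rw [Real.dist_0_eq_abs, abs_of_nonneg (Real.iSup_nonneg (hnonneg t))]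
  refine lt_of_le_of_lt (ciSup_le fun x => ?_) (half_lt_self hε)
  obtain ⟨y, hy, hxy⟩ := (hper t).exists_mem_Ico₀ hc x
  have := ht y (Set.Ico_subset_Icc_self hy)
  rw [Pi.zero_apply, dist_zero_left, Real.norm_of_nonneg (hnonneg t y)] at this
  exact hxy ▸ this.le

lemma e_add (x y : ℝ) : e (x + y) = e x * e y := by
  simp only [e, ofReal_add, mul_add, exp_add]

lemma norm_e (x : ℝ) : ‖e x‖ = 1 := by
  simp [e, norm_exp, mul_re]

lemma e_intCast (k : ℤ) : e k = 1 := by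
  rw [e, ofReal_intCast, show 2 * (Real.pi : ℂ) * I * k = k * (2 * Real.pi * I) by ring,
    exp_int_mul_two_pi_mul_I]

@[fun_prop]
lemma continuous_e : Continuous e := by
  unfold e
  fun_prop

noncomputable def expSum (f : ℕ → ℂ) (N : ℕ) (α : ℝ) : ℂ :=
  ∑ n ∈ range N, f n * e (n * α)

noncomputable def expSumSup (f : ℕ → ℂ) (N : ℕ) : ℝ :=
  ⨆ α : ℝ, ‖expSum f N α‖ / N

section ExpSum

variable {f : ℕ → ℂ}

lemma continuous_expSum (f : ℕ → ℂ) (N : ℕ) : Continuous (expSum f N) := by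
  unfold expSum
  fun_prop

lemma expSum_periodic (f : ℕ → ℂ) (N : ℕ) : Function.Periodic (expSum f N) 1 := by
  intro α
  refine sum_congr rfl fun n _ => ?_
  rw [mul_add, mul_one, e_add, ← Int.cast_natCast, e_intCast, mul_one]

lemma expSum_add (f : ℕ → ℂ) (a b : ℕ) (α : ℝ) :
    expSum f (a + b) α = expSum f a α + ∑ m ∈ range b, f (a + m) * e ((a + m : ℕ) * α) :=
  sum_range_add _ a b

lemma norm_expSum_le (hmod : ∀ n, ‖f n‖ = 1) (N : ℕ) (α : ℝ) : ‖expSum f N α‖ ≤ N :=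
  (norm_sum_le _ _).trans_eq <| by simp [hmod, norm_e]

lemma expSumSup_nonneg (f : ℕ → ℂ) (N : ℕ) : 0 ≤ expSumSup f N :=
  Real.iSup_nonneg fun _ => by positivity

lemma norm_expSum_le_expSumSup_mul (hmod : ∀ n, ‖f n‖ = 1) (N : ℕ) (α : ℝ) :
    ‖expSum f N α‖ ≤ expSumSup f N * N := by
  rcases N.eq_zero_or_pos with rfl | hN
  · simp [expSum]
  have hbdd : BddAbove (Set.range fun α : ℝ => ‖expSum f N α‖ / N) :=
    ⟨1, Set.forall_mem_range.2 fun α => div_le_one_of_le₀ (norm_expSum_le hmod N α) N.cast_nonneg⟩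
  exact (div_le_iff₀ (by positivity)).1 (le_ciSup hbdd α)

end ExpSum

namespace QMult

variable {q : ℕ} {f : ℕ → ℂ}

lemma expSum_add_of_dvd (hf : QMult q f) {t c r : ℕ} (hc : q ^ t ∣ c) (hr : r ≤ q ^ t) (α : ℝ) :
    expSum f (c + r) α = expSum f c α + f c * e (c * α) * expSum f r α := by
  rw [expSum_add]
  congr 1
  rw [expSum, mul_sum]
  refine sum_congr rfl fun m hm => ?_
  rw [add_comm c m, hf t m c ((mem_range.1 hm).trans_le hr) hc, Nat.cast_add, add_mul, e_add]
  ring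

lemma norm_expSum_add_le (hf : QMult q f) (hmod : ∀ n, ‖f n‖ = 1) {t c r : ℕ}
    (hc : q ^ t ∣ c) (hr : r ≤ q ^ t) (α : ℝ) :
    ‖expSum f (c + r) α‖ ≤ ‖expSum f c α‖ + ‖expSum f r α‖ := by
  rw [hf.expSum_add_of_dvd hc hr]
  refine (norm_add_le _ _).trans_eq ?_
  rw [norm_mul, norm_mul, hmod, norm_e, one_mul, one_mul]

lemma norm_expSum_mul_pow_le (hf : QMult q f) (hmod : ∀ n, ‖f n‖ = 1) (a t : ℕ) (α : ℝ) :
    ‖expSum f (a * q ^ t) α‖ ≤ a * ‖expSum f (q ^ t) α‖ := by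
  induction a with
  | zero => simp [expSum]
  | succ a ih =>
    rw [add_mul, one_mul, Nat.cast_succ, add_one_mul]
    exact (hf.norm_expSum_add_le hmod (dvd_mul_left _ _) le_rfl α).trans (by gcongr)

lemma norm_expSum_le_sum_pow (hf : QMult q f) (hmod : ∀ n, ‖f n‖ = 1) (hq : 0 < q) {t N : ℕ}
    (hN : N < q ^ t) (α : ℝ) :
    ‖expSum f N α‖ ≤ (q - 1) * ∑ j ∈ range t, ‖expSum f (q ^ j) α‖ := by
  induction t generalizing N with
  | zero => simp_all [expSum]
  | succ t ih =>
    have hqt : 0 < q ^ t := pow_pos hq t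
    have hdigit : N / q ^ t < q := (Nat.div_lt_iff_lt_mul hqt).2 (by rwa [← pow_succ'])
    have hdigit' : ((N / q ^ t : ℕ) : ℝ) ≤ q - 1 := by
      rw [le_sub_iff_add_le]
      exact_mod_cast hdigit
    have hrem := ih (Nat.mod_lt N hqt)
    rw [← Nat.div_add_mod' N (q ^ t)]
    calc ‖expSum f (N / q ^ t * q ^ t + N % q ^ t) α‖
        ≤ ‖expSum f (N / q ^ t * q ^ t) α‖ + ‖expSum f (N % q ^ t) α‖ :=
          hf.norm_expSum_add_le hmod (dvd_mul_left _ _) (Nat.mod_lt N hqt).le α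
      _ ≤ (q - 1) * ‖expSum f (q ^ t) α‖ + (q - 1) * ∑ j ∈ range t, ‖expSum f (q ^ j) α‖ := by
          gcongr
          exact (hf.norm_expSum_mul_pow_le hmod _ t α).trans (by gcongr)
      _ = (q - 1) * ∑ j ∈ range (t + 1), ‖expSum f (q ^ j) α‖ := by
          rw [sum_range_succ]
          ring

lemma antitone_norm_expSum_pow_div (hf : QMult q f) (hmod : ∀ n, ‖f n‖ = 1) (hq : 0 < q)
    (α : ℝ) : Antitone fun t => ‖expSum f (q ^ t) α‖ / (q ^ t : ℕ) := by
  refine antitone_nat_of_succ_le fun t => ?_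
  have hstep : ‖expSum f (q ^ (t + 1)) α‖ ≤ q * ‖expSum f (q ^ t) α‖ := by
    simpa only [pow_succ'] using hf.norm_expSum_mul_pow_le hmod q t α
  rw [div_le_div_iff₀ (Nat.cast_pos.2 (pow_pos hq _)) (Nat.cast_pos.2 (pow_pos hq _))]
  calc ‖expSum f (q ^ (t + 1)) α‖ * (q ^ t : ℕ) ≤ q * ‖expSum f (q ^ t) α‖ * (q ^ t : ℕ) := by
        gcongr
    _ = ‖expSum f (q ^ t) α‖ * (q ^ (t + 1) : ℕ) := by
        push_cast
        ring

lemma expSumSup_le (hf : QMult q f) (hmod : ∀ n, ‖f n‖ = 1) (hq : 1 < q) {N : ℕ} (hN : N ≠ 0) :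
    expSumSup f N ≤ (q - 1) *
      ((∑ j ∈ range (Nat.log q N + 1), expSumSup f (q ^ j) * (q : ℝ) ^ j) /
        (q : ℝ) ^ Nat.log q N) := by
  have hq' : (1 : ℝ) ≤ q := by exact_mod_cast hq.le
  refine ciSup_le fun α => ?_
  rw [← mul_div_assoc]
  have hsum : 0 ≤ ∑ j ∈ range (Nat.log q N + 1), expSumSup f (q ^ j) * (q : ℝ) ^ j :=
    sum_nonneg fun j _ => mul_nonneg (expSumSup_nonneg f _) (by positivity)
  refine div_le_div₀ (mul_nonneg (by linarith) hsum) ?_ (pow_pos (by linarith) _)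
    (by exact_mod_cast Nat.pow_log_le_self q hN)
  calc ‖expSum f N α‖
      ≤ (q - 1) * ∑ j ∈ range (Nat.log q N + 1), ‖expSum f (q ^ j) α‖ :=
        hf.norm_expSum_le_sum_pow hmod (by omega) (Nat.lt_pow_succ_log_self hq N) α
    _ ≤ (q - 1) * ∑ j ∈ range (Nat.log q N + 1), expSumSup f (q ^ j) * (q : ℝ) ^ j := by
        gcongr with j
        exact_mod_cast norm_expSum_le_expSumSup_mul hmod _ α

end QMult

/-- If the Fourier averages of a `q`-multiplicative sequence tend to
zero for each fixed frequency `α`, then they tend to zero uniformly in `α`. -/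
theorem stmt9 (q : ℕ) (hq : 2 ≤ q) (f : ℕ → ℂ) (hf : QMult q f)
    (hmod : ∀ n, ‖f n‖ = 1)
    (hosc : ∀ α : ℝ, Filter.Tendsto
      (fun N : ℕ => (∑ n ∈ Finset.range N, f n * e (n * α)) / N) Filter.atTop (nhds 0)) :
    Filter.Tendsto
      (fun N : ℕ => ⨆ α : ℝ,
        ‖(∑ n ∈ Finset.range N, f n * e (n * α)) / N‖)
      Filter.atTop (nhds 0) := by
  have hq1 : 1 < q := hq
  have hpow : Tendsto (fun t => expSumSup f (q ^ t)) atTop (𝓝 0) := by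
    refine tendsto_iSup_of_antitone_of_periodic one_pos
      (fun t => (continuous_expSum f _).norm.div_const _)
      (fun t => (expSum_periodic f _).comp fun z => ‖z‖ / (q ^ t : ℕ))
      (hf.antitone_norm_expSum_pow_div hmod (by omega)) fun α => ?_
    simpa [expSum] using ((hosc α).comp (tendsto_pow_atTop_atTop_of_one_lt hq1)).norm
  have hbound : Tendsto (fun N => ((q : ℝ) - 1) *
      ((∑ j ∈ range (Nat.log q N + 1), expSumSup f (q ^ j) * (q : ℝ) ^ j) /
        (q : ℝ) ^ Nat.log q N)) atTop (𝓝 0) := by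
    simpa using ((tendsto_sum_mul_pow_div_pow (by exact_mod_cast hq1) hpow).comp
      (Nat.tendsto_log_atTop hq1)).const_mul ((q : ℝ) - 1)
  simp only [norm_div, norm_natCast]
  exact squeeze_zero' (Eventually.of_forall (expSumSup_nonneg f))
    ((eventually_ne_atTop 0).mono fun N hN => hf.expSumSup_le hmod hq1 hN) hbound
end

section
/- For every integer s ≥ 2 there exists a constant C ≥ 1 such that for every integer N ≥ 1 and every f : ℕ → ℂ with |f(n)| = 1 for all n, one has (1/C)·(1 − Re D) ≤ 1 − ‖f‖_{U^s[N]}^{2^s} ≤ C·(1 − Re D), where D := E_{(e₀,…,e_s) ∈ [0,N)^{s+1} with e₀+⋯+e_s < N} ∏_{ω ∈ {0,1}^s} C^{|ω|} f(e₀ + ω₁e₁ + ⋯ + ω_s e_s), i.e. the average of the indicated product over all (s+1)-tuples of nonnegative integers e₀,…,e_s, each less than N, whose sum is less than N. -/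
open Finset Complex

noncomputable section

/-- The vertex `e₀ + ω₁ e₁ + ⋯ + ω_s e_s` for a tuple of natural numbers. -/
def vertexN (s : ℕ) (en : Fin (s + 1) → ℕ) (ω : Fin s → Bool) : ℕ :=
  en 0 + ∑ i : Fin s, if ω i then en i.succ else 0

/-- The simplex of tuples `(e₀, …, e_s) ∈ [0,N)^{s+1}` with `e₀ + ⋯ + e_s < N`. -/
def simplexSet (s N : ℕ) : Finset (Fin (s + 1) → ℕ) :=
  (Fintype.piFinset fun _ : Fin (s + 1) => Finset.range N).filter fun en =>
    ∑ i, en i < N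

/-- The average `D` of the Gowers product over the simplex. -/
def simplexAvg (s N : ℕ) (f : ℕ → ℂ) : ℂ :=
  (∑ en ∈ simplexSet s N, ∏ ω : Fin s → Bool,
    (starRingEnd ℂ)^[wt ω] (f (vertexN s en ω))) / (simplexSet s N).card

end

/-!
Both `1 - Re D` and `1 - ‖f‖_{U^s[N]}^{2^s}` are normalised sums of the nonnegative defects
`1 - Re ∏_ω C^{|ω|} f(·)`, over the simplex and over `Π_s(N)` respectively. The simplex embeds
into `Π_s(N)`. Conversely, flipping every negative edge `nᵢ < 0` of a parallelepiped (and moving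
the base point to the vertex that uses exactly those edges) gives a point of the simplex with
the same vertex set, reindexed by `ω ↦ ω xor ε`; this changes the product at most by a complex
conjugation, and each point of the simplex arises from at most `2^s` sign patterns `ε`.
Together with `|Π_s(N)| ≤ (4(s+1))^{s+1} |simplex|` the two defects are comparable.

`gowersNorm` is a real power, which at a negative Gowers average `y` takes the value
`|y| cos(π/2^s)^{2^s}`; in that case both sides are bounded above and below by constants.
-/

theorem Function.Involutive.iterate_mod_two {α : Type*} {f : α → α}
    (hf : Function.Involutive f) (k : ℕ) : f^[k] = f^[k % 2] := by
  have hf2 : f^[2] = id := funext hf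
  conv_lhs => rw [← Nat.mod_add_div k 2, Function.iterate_add, Function.iterate_mul, hf2,
    Function.iterate_id, Function.comp_id]

lemma re_iterate_conj (k : ℕ) (z : ℂ) : ((starRingEnd ℂ)^[k] z).re = z.re := by
  induction k with
  | zero => rfl
  | succ k ih => rw [Function.iterate_succ_apply', conj_re, ih]

lemma norm_iterate_conj (k : ℕ) (z : ℂ) : ‖(starRingEnd ℂ)^[k] z‖ = ‖z‖ := by
  induction k with
  | zero => rfl
  | succ k ih => rw [Function.iterate_succ_apply', norm_conj, ih]

lemma one_sub_re_sum_div_card {α : Type*} {A : Finset α} (hA : A.Nonempty) (t : α → ℂ) :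
    1 - ((∑ x ∈ A, t x) / #A).re = (∑ x ∈ A, (1 - (t x).re)) / #A := by
  have hA' : (#A : ℝ) ≠ 0 := Nat.cast_ne_zero.2 hA.card_pos.ne'
  rw [div_natCast_re, re_sum, sum_sub_distrib, sum_const, nsmul_one]
  field_simp

lemma norm_sum_div_card_le_one {α : Type*} {A : Finset α} {t : α → ℂ}
    (ht : ∀ x ∈ A, ‖t x‖ ≤ 1) : ‖(∑ x ∈ A, t x) / #A‖ ≤ 1 := by
  rw [norm_div, norm_natCast]
  refine div_le_one_of_le₀ ((norm_sum_le _ _).trans ?_) (Nat.cast_nonneg _)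
  simpa using sum_le_sum ht

lemma Real.rpow_inv_natCast_pow_of_neg {x : ℝ} (hx : x < 0) {n : ℕ} (hn : n ≠ 0) :
    (x ^ (n⁻¹ : ℝ)) ^ n = -x * Real.cos (Real.pi / n) ^ n := by
  rw [Real.rpow_def_of_neg hx, mul_pow, ← Real.exp_nat_mul, mul_comm (n : ℝ), mul_assoc,
    inv_mul_cancel₀ (Nat.cast_ne_zero.2 hn), mul_one, ← Real.log_neg_eq_log,
    Real.exp_log (neg_pos.2 hx), inv_mul_eq_div]

lemma one_div_two_pow_eq_inv_natCast (s : ℕ) : (1 : ℝ) / 2 ^ s = ((2 ^ s : ℕ) : ℝ)⁻¹ := by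
  push_cast
  exact one_div _

lemma cos_pi_div_two_pow_pow_mem_Ico {s : ℕ} (hs : 1 ≤ s) :
    Real.cos (Real.pi / 2 ^ s) ^ 2 ^ s ∈ Set.Ico 0 1 := by
  have h2s : (2 : ℝ) ≤ 2 ^ s := le_self_pow₀ one_le_two (by omega)
  have hx : 0 < Real.pi / 2 ^ s := by positivity
  have hx2 : Real.pi / 2 ^ s ≤ Real.pi / 2 := div_le_div_of_nonneg_left Real.pi_pos.le two_pos h2s
  have hcos0 : 0 ≤ Real.cos (Real.pi / 2 ^ s) :=
    Real.cos_nonneg_of_mem_Icc ⟨by linarith [Real.pi_pos], hx2⟩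
  have hcos1 : Real.cos (Real.pi / 2 ^ s) < 1 := by
    simpa using Real.cos_lt_cos_of_nonneg_of_le_pi le_rfl (by linarith [Real.pi_pos]) hx
  exact ⟨pow_nonneg hcos0 _, pow_lt_one₀ hcos0 hcos1 (by positivity)⟩

section Parallelepipeds

variable {s N : ℕ}

lemma wt_xor_add (ω ε : Fin s → Bool) :
    wt (fun i => xor (ω i) (ε i)) + 2 * wt (fun i => ω i && ε i) = wt ω + wt ε := by
  simp only [wt, card_filter, ← sum_add_distrib, mul_sum]
  exact sum_congr rfl fun i _ => by cases ω i <;> cases ε i <;> rfl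

lemma sum_eq_vertex_true (n : Fin (s + 1) → ℤ) : ∑ i, n i = vertex s n fun _ => true := by
  simp [vertex, Fin.sum_univ_succ]

lemma natCast_vertexN (m : Fin (s + 1) → ℕ) (ω : Fin s → Bool) :
    (vertexN s m ω : ℤ) = vertex s (fun i => (m i : ℤ)) ω := by
  simp only [vertexN, vertex]
  push_cast [apply_ite]
  rfl

lemma vertexN_le_sum (m : Fin (s + 1) → ℕ) (ω : Fin s → Bool) : vertexN s m ω ≤ ∑ i, m i := by
  rw [Fin.sum_univ_succ, vertexN]
  exact Nat.add_le_add_left (sum_le_sum fun i _ => by split <;> omega) _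

lemma mem_PiSet {n : Fin (s + 1) → ℤ} :
    n ∈ PiSet s N ↔ ∀ ω : Fin s → Bool, 0 ≤ vertex s n ω ∧ vertex s n ω < N := by
  refine ⟨fun h => (mem_filter.1 h).2, fun h => mem_filter.2 ⟨mem_Icc.2 ?_, h⟩⟩
  have h0 := h fun _ => false
  simp only [vertex, Bool.false_eq_true, if_false, sum_const_zero, add_zero] at h0
  refine ⟨fun i => ?_, fun i => ?_⟩ <;> cases i using Fin.cases with
  | zero => simp only; omega
  | succ j =>
    have hj := h fun i => decide (i = j)
    simp only [vertex, decide_eq_true_eq, sum_ite_eq', mem_univ, if_true] at hj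
    simp only; omega

lemma mem_simplexSet_of_sum_lt {m : Fin (s + 1) → ℕ} (h : ∑ i, m i < N) : m ∈ simplexSet s N :=
  mem_filter.2 ⟨Fintype.mem_piFinset.2 fun i =>
    mem_range.2 ((single_le_sum (fun j _ => Nat.zero_le (m j)) (mem_univ i)).trans_lt h), h⟩

lemma simplexSet_nonempty (hN : 0 < N) : (simplexSet s N).Nonempty :=
  ⟨0, mem_simplexSet_of_sum_lt (by simpa using hN)⟩

lemma natCast_mem_PiSet {m : Fin (s + 1) → ℕ} (hm : m ∈ simplexSet s N) :
    (fun i => (m i : ℤ)) ∈ PiSet s N := by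
  refine mem_PiSet.2 fun ω => ?_
  rw [← natCast_vertexN]
  exact ⟨Int.natCast_nonneg _,
    by exact_mod_cast (vertexN_le_sum m ω).trans_lt (mem_filter.1 hm).2⟩

def reflectSigns (n : Fin (s + 1) → ℤ) : Fin s → Bool := fun i => decide (n i.succ < 0)

def reflect (n : Fin (s + 1) → ℤ) : Fin (s + 1) → ℕ :=
  Fin.cons (vertex s n (reflectSigns n)).toNat fun i => (n i.succ).natAbs

lemma natCast_reflect {n : Fin (s + 1) → ℤ} (hn : 0 ≤ vertex s n (reflectSigns n)) :
    (fun i => (reflect n i : ℤ)) = Fin.cons (vertex s n (reflectSigns n)) fun i => |n i.succ| := by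
  funext i
  cases i using Fin.cases <;> simp [reflect, hn]

lemma vertex_natCast_reflect {n : Fin (s + 1) → ℤ} (hn : 0 ≤ vertex s n (reflectSigns n))
    (ω : Fin s → Bool) :
    vertex s (fun i => (reflect n i : ℤ)) ω = vertex s n fun i => xor (ω i) (reflectSigns n i) := by
  have hsign (a : ℤ) (b : Bool) : ((if decide (a < 0) then a else 0) + if b then |a| else 0)
      = if xor b (decide (a < 0)) then a else 0 := by
    rcases lt_or_ge a 0 with h | h <;> cases b <;> simp [h, abs_of_neg, abs_of_nonneg, not_lt.2]
  rw [natCast_reflect hn]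
  simp only [vertex, Fin.cons_zero, Fin.cons_succ, add_assoc, ← sum_add_distrib]
  exact congrArg (n 0 + ·) (sum_congr rfl fun i _ => hsign _ _)

lemma reflect_mem_simplexSet {n : Fin (s + 1) → ℤ} (hn : n ∈ PiSet s N) :
    reflect n ∈ simplexSet s N := by
  have hv := mem_PiSet.1 hn
  refine mem_simplexSet_of_sum_lt ?_
  have := (hv fun i => xor true (reflectSigns n i)).2
  rw [← vertex_natCast_reflect (hv _).1, ← sum_eq_vertex_true] at this
  exact_mod_cast this

lemma injOn_reflect_reflectSigns :
    Set.InjOn (fun n => (reflect n, reflectSigns n)) (PiSet s N : Set (Fin (s + 1) → ℤ)) := by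
  intro n hn n' hn' h
  obtain ⟨hr, hε⟩ := Prod.mk.inj h
  have hsucc (i : Fin s) : n i.succ = n' i.succ := by
    have habs := congrFun hr i.succ
    have hsign := congrFun hε i
    simp only [reflect, Fin.cons_succ, reflectSigns, decide_eq_decide] at habs hsign
    omega
  have hcons := congrArg (fun m i => (m i : ℤ)) hr
  simp only [natCast_reflect ((mem_PiSet.1 hn) _).1, natCast_reflect ((mem_PiSet.1 hn') _).1,
    Fin.cons_inj] at hcons
  funext i
  cases i using Fin.cases with
  | zero => simpa only [vertex, hε, hsucc, add_left_inj] using hcons.1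
  | succ j => exact hsucc j

lemma card_simplexSet_le_card_PiSet : #(simplexSet s N) ≤ #(PiSet s N) :=
  card_le_card_of_injOn (fun m i => (m i : ℤ)) (fun _ hm => natCast_mem_PiSet hm)
    fun _ _ _ _ h => funext fun i => Int.ofNat_inj.1 (congrFun h i)

lemma card_PiSet_le : #(PiSet s N) ≤ (2 * N + 1) ^ (s + 1) := by
  refine (card_filter_le _ _).trans_eq ?_
  rw [Pi.card_Icc, prod_const, Int.card_Icc, card_univ, Fintype.card_fin]
  congr 1
  omega

lemma pow_le_card_simplexSet {k : ℕ} (hk : (s + 1) * (k - 1) < N) :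
    k ^ (s + 1) ≤ #(simplexSet s N) := by
  calc k ^ (s + 1) = #(Fintype.piFinset fun _ : Fin (s + 1) => range k) := by simp
    _ ≤ #(simplexSet s N) := card_le_card fun m hm => mem_simplexSet_of_sum_lt ?_
  have hmk (i) : m i ≤ k - 1 := Nat.le_sub_one_of_lt (mem_range.1 (Fintype.mem_piFinset.1 hm i))
  calc ∑ i, m i ≤ ∑ _i : Fin (s + 1), (k - 1) := sum_le_sum fun i _ => hmk i
    _ < N := by simpa using hk

lemma card_PiSet_le_mul_card_simplexSet (hN : 1 ≤ N) :
    #(PiSet s N) ≤ (4 * (s + 1)) ^ (s + 1) * #(simplexSet s N) := by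
  set q := N / (s + 1)
  set k := max 1 q
  have hqN : (s + 1) * q ≤ N := Nat.mul_div_le N (s + 1)
  have hNq : N < (s + 1) * q + (s + 1) := by
    simpa [mul_add] using Nat.lt_mul_div_succ N (Nat.succ_pos s)
  have hk1 : s + 1 ≤ (s + 1) * k := Nat.le_mul_of_pos_right _ (le_max_left 1 q)
  have hkq : (s + 1) * q ≤ (s + 1) * k := Nat.mul_le_mul_left _ (le_max_right 1 q)
  have hk : (s + 1) * (k - 1) < N := by
    rw [Nat.mul_sub_one]
    rcases max_choice 1 q with h | h <;> simp only [k, h] at hk1 hkq ⊢ <;> omega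
  calc #(PiSet s N) ≤ (2 * N + 1) ^ (s + 1) := card_PiSet_le
    _ ≤ (4 * (s + 1) * k) ^ (s + 1) := Nat.pow_le_pow_left (by rw [mul_assoc]; omega) _
    _ = (4 * (s + 1)) ^ (s + 1) * k ^ (s + 1) := mul_pow _ _ _
    _ ≤ (4 * (s + 1)) ^ (s + 1) * #(simplexSet s N) :=
        Nat.mul_le_mul_left _ (pow_le_card_simplexSet hk)

end Parallelepipeds

section GowersProducts

variable {s N : ℕ} {f : ℕ → ℂ}

lemma gowersTerm_natCast_reflect {n : Fin (s + 1) → ℤ} (hn : 0 ≤ vertex s n (reflectSigns n)) :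
    gowersTerm s f (fun i => (reflect n i : ℤ))
      = (starRingEnd ℂ)^[wt (reflectSigns n)] (gowersTerm s f n) := by
  set ε := reflectSigns n
  have hxor : Function.Involutive fun (ω : Fin s → Bool) i => xor (ω i) (ε i) := fun ω => by
    funext i; simp
  have hconj : Function.Involutive (starRingEnd ℂ) := conj_conj
  calc gowersTerm s f (fun i => (reflect n i : ℤ))
      = ∏ ω : Fin s → Bool, (starRingEnd ℂ)^[wt ω]
          (f (vertex s n fun i => xor (ω i) (ε i)).toNat) := by
        simp only [gowersTerm, vertex_natCast_reflect hn]
        rfl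
    _ = ∏ ω : Fin s → Bool, (starRingEnd ℂ)^[wt fun i => xor (ω i) (ε i)]
          (f (vertex s n ω).toNat) := by
        refine (Equiv.prod_comp (hxor.toPerm _) _).symm.trans ?_
        simp only [Function.Involutive.coe_toPerm, Bool.bne_self_right]
    _ = ∏ ω : Fin s → Bool, (starRingEnd ℂ)^[wt ε] ((starRingEnd ℂ)^[wt ω]
          (f (vertex s n ω).toNat)) := by
        refine prod_congr rfl fun ω _ => ?_
        have hmod : wt (fun i => xor (ω i) (ε i)) % 2 = (wt ε + wt ω) % 2 := by
          have := wt_xor_add ω ε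
          omega
        rw [← Function.iterate_add_apply, hconj.iterate_mod_two, hmod, ← hconj.iterate_mod_two]
    _ = _ := by rw [gowersTerm, ← RingHom.coe_pow, map_prod]

lemma norm_gowersTerm_le_one (hf : ∀ n, ‖f n‖ ≤ 1) (n : Fin (s + 1) → ℤ) :
    ‖gowersTerm s f n‖ ≤ 1 := by
  rw [gowersTerm, norm_prod]
  exact prod_le_one (fun _ _ => norm_nonneg _) fun ω _ => (norm_iterate_conj _ _).trans_le (hf _)

lemma one_sub_re_gowersTerm_nonneg (hf : ∀ n, ‖f n‖ ≤ 1) (n : Fin (s + 1) → ℤ) :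
    0 ≤ 1 - (gowersTerm s f n).re :=
  sub_nonneg.2 ((re_le_norm _).trans (norm_gowersTerm_le_one hf n))

lemma sum_simplexSet_le_sum_PiSet (hf : ∀ n, ‖f n‖ ≤ 1) :
    ∑ m ∈ simplexSet s N, (1 - (gowersTerm s f fun i => (m i : ℤ)).re)
      ≤ ∑ n ∈ PiSet s N, (1 - (gowersTerm s f n).re) := by
  have hinj : Set.InjOn (fun (m : Fin (s + 1) → ℕ) i => (m i : ℤ)) (simplexSet s N) :=
    fun m _ m' _ h => funext fun i => Int.ofNat_inj.1 (congrFun h i)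
  rw [← sum_image (f := fun n => 1 - (gowersTerm s f n).re) hinj]
  exact sum_le_sum_of_subset_of_nonneg (image_subset_iff.2 fun m hm => natCast_mem_PiSet hm)
    fun n _ _ => one_sub_re_gowersTerm_nonneg hf n

lemma sum_PiSet_le_sum_simplexSet (hf : ∀ n, ‖f n‖ ≤ 1) :
    ∑ n ∈ PiSet s N, (1 - (gowersTerm s f n).re)
      ≤ 2 ^ s * ∑ m ∈ simplexSet s N, (1 - (gowersTerm s f fun i => (m i : ℤ)).re) := by
  let g : (Fin (s + 1) → ℕ) → ℝ := fun m => 1 - (gowersTerm s f fun i => (m i : ℤ)).re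
  calc ∑ n ∈ PiSet s N, (1 - (gowersTerm s f n).re)
      = ∑ n ∈ PiSet s N, g (reflect n) := sum_congr rfl fun n hn => by
        simp only [g, gowersTerm_natCast_reflect ((mem_PiSet.1 hn) _).1, re_iterate_conj]
    _ = ∑ p ∈ (PiSet s N).image fun n => (reflect n, reflectSigns n), g p.1 :=
        (sum_image (f := fun p : (Fin (s + 1) → ℕ) × (Fin s → Bool) => g p.1)
          (g := fun n => (reflect n, reflectSigns n)) injOn_reflect_reflectSigns).symm
    _ ≤ ∑ p ∈ simplexSet s N ×ˢ univ, g p.1 :=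
        sum_le_sum_of_subset_of_nonneg
          (image_subset_iff.2 fun n hn => mem_product.2 ⟨reflect_mem_simplexSet hn, mem_univ _⟩)
          fun p _ _ => one_sub_re_gowersTerm_nonneg hf _
    _ = 2 ^ s * ∑ m ∈ simplexSet s N, g m := by
        simp only [sum_product, sum_const, card_univ, Fintype.card_fun, Fintype.card_bool,
          Fintype.card_fin, nsmul_eq_mul, mul_sum]
        push_cast
        rfl

lemma simplexAvg_eq :
    simplexAvg s N f
      = (∑ m ∈ simplexSet s N, gowersTerm s f fun i => (m i : ℤ)) / #(simplexSet s N) := by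
  simp only [simplexAvg, gowersTerm, ← natCast_vertexN, Int.toNat_natCast]

lemma abs_re_gowersAvg_le_one (hf : ∀ n, ‖f n‖ ≤ 1) : |(gowersAvg s N f).re| ≤ 1 :=
  (abs_re_le_norm _).trans (norm_sum_div_card_le_one fun n _ => norm_gowersTerm_le_one hf n)

lemma abs_re_simplexAvg_le_one (hf : ∀ n, ‖f n‖ ≤ 1) : |(simplexAvg s N f).re| ≤ 1 := by
  rw [simplexAvg_eq]
  exact (abs_re_le_norm _).trans (norm_sum_div_card_le_one fun m _ => norm_gowersTerm_le_one hf _)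

lemma one_sub_re_simplexAvg_le (hf : ∀ n, ‖f n‖ ≤ 1) (hN : 1 ≤ N) :
    1 - (simplexAvg s N f).re ≤ (4 * (s + 1)) ^ (s + 1) * (1 - (gowersAvg s N f).re) := by
  have hS := simplexSet_nonempty (s := s) hN
  have hP : (PiSet s N).Nonempty := card_pos.1 (hS.card_pos.trans_le card_simplexSet_le_card_PiSet)
  have hPS : (#(PiSet s N) : ℝ) ≤ (4 * (s + 1)) ^ (s + 1) * #(simplexSet s N) := by
    exact_mod_cast card_PiSet_le_mul_card_simplexSet hN
  have ha : 0 ≤ ∑ n ∈ PiSet s N, (1 - (gowersTerm s f n).re) :=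
    sum_nonneg fun n _ => one_sub_re_gowersTerm_nonneg hf n
  rw [simplexAvg_eq, gowersAvg, one_sub_re_sum_div_card hS, one_sub_re_sum_div_card hP,
    mul_div_assoc', div_le_div_iff₀ (by simpa using hS.card_pos) (by simpa using hP.card_pos)]
  calc _ ≤ (∑ n ∈ PiSet s N, (1 - (gowersTerm s f n).re)) * #(PiSet s N) :=
        mul_le_mul_of_nonneg_right (sum_simplexSet_le_sum_PiSet hf) (Nat.cast_nonneg _)
    _ ≤ _ := by nlinarith [mul_le_mul_of_nonneg_left hPS ha]

lemma one_sub_re_gowersAvg_le (hf : ∀ n, ‖f n‖ ≤ 1) (hN : 1 ≤ N) :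
    1 - (gowersAvg s N f).re ≤ 2 ^ s * (1 - (simplexAvg s N f).re) := by
  have hS := simplexSet_nonempty (s := s) hN
  have hP : (PiSet s N).Nonempty := card_pos.1 (hS.card_pos.trans_le card_simplexSet_le_card_PiSet)
  have hSP : (#(simplexSet s N) : ℝ) ≤ #(PiSet s N) := by
    exact_mod_cast card_simplexSet_le_card_PiSet
  have hb : 0 ≤ ∑ m ∈ simplexSet s N, (1 - (gowersTerm s f fun i => (m i : ℤ)).re) :=
    sum_nonneg fun m _ => one_sub_re_gowersTerm_nonneg hf _
  rw [simplexAvg_eq, gowersAvg, one_sub_re_sum_div_card hS, one_sub_re_sum_div_card hP,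
    mul_div_assoc']
  calc _ ≤ 2 ^ s * (∑ m ∈ simplexSet s N, (1 - (gowersTerm s f fun i => (m i : ℤ)).re))
          / #(PiSet s N) := by
        gcongr
        exact sum_PiSet_le_sum_simplexSet hf
    _ ≤ _ := div_le_div_of_nonneg_left (by positivity) (by simpa using hS.card_pos) hSP

lemma gowersNorm_pow_of_nonneg (h : 0 ≤ (gowersAvg s N f).re) :
    gowersNorm s N f ^ 2 ^ s = (gowersAvg s N f).re := by
  rw [gowersNorm, one_div_two_pow_eq_inv_natCast, Real.rpow_inv_natCast_pow h (by positivity)]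

lemma gowersNorm_pow_of_neg (h : (gowersAvg s N f).re < 0) :
    gowersNorm s N f ^ 2 ^ s = -(gowersAvg s N f).re * Real.cos (Real.pi / 2 ^ s) ^ 2 ^ s := by
  rw [gowersNorm, one_div_two_pow_eq_inv_natCast,
    Real.rpow_inv_natCast_pow_of_neg h (by positivity), Nat.cast_pow, Nat.cast_ofNat]

end GowersProducts

lemma two_sided_bound_of_comparable {y g v c K M C : ℝ} (hg_nonneg : 0 ≤ y → g = y)
    (hg_neg : y < 0 → g = -y * c) (hc : 0 ≤ c) (hy : -1 ≤ y) (hv : 0 ≤ v) (hv2 : v ≤ 2)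
    (hvy : v ≤ K * (1 - y)) (hyv : 1 - y ≤ M * v) (hK : 0 < K) (hKC : K ≤ C) (hMC : M ≤ C)
    (hcC : 2 ≤ (1 - c) * C) :
    1 / C * v ≤ 1 - g ∧ 1 - g ≤ C * v := by
  have hC : 0 < C := hK.trans_le hKC
  have hMv := mul_le_mul_of_nonneg_right hMC hv
  rw [div_mul_eq_mul_div, one_mul, div_le_iff₀ hC]
  rcases le_or_gt 0 y with h | h
  · rw [hg_nonneg h]
    have h1y : 0 ≤ 1 - y := by nlinarith
    exact ⟨by nlinarith [mul_le_mul_of_nonneg_right hKC h1y], by linarith⟩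
  · rw [hg_neg h]
    have hyc : -c ≤ y * c := by nlinarith
    exact ⟨by nlinarith, by nlinarith [mul_nonneg (neg_nonneg.2 h.le) hc]⟩

/-- `1 - ‖f‖_{U^s[N]}^{2^s}` is comparable to `1 - Re D`, where `D`
is the average of the Gowers product over the simplex `e₀ + ⋯ + e_s < N`. -/
theorem stmt16 (s : ℕ) (hs : 2 ≤ s) :
    ∃ C : ℝ, 1 ≤ C ∧ ∀ N : ℕ, 1 ≤ N → ∀ f : ℕ → ℂ, (∀ n, ‖f n‖ = 1) →
      (1 / C) * (1 - (simplexAvg s N f).re) ≤ 1 - gowersNorm s N f ^ (2 ^ s) ∧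
      1 - gowersNorm s N f ^ (2 ^ s) ≤ C * (1 - (simplexAvg s N f).re) := by
  obtain ⟨hc0, hc1⟩ := cos_pi_div_two_pow_pow_mem_Ico (s := s) (by omega)
  set c := Real.cos (Real.pi / 2 ^ s) ^ 2 ^ s
  set K : ℝ := (4 * (s + 1)) ^ (s + 1)
  have hK : 1 ≤ K := one_le_pow₀ (by linarith)
  set C := max (max K (2 ^ s)) (2 / (1 - c))
  have hKC : K ≤ C := (le_max_left _ _).trans (le_max_left _ _)
  refine ⟨C, hK.trans hKC, fun N hN f hf => ?_⟩
  have hf' : ∀ n, ‖f n‖ ≤ 1 := fun n => (hf n).le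
  obtain ⟨hy, -⟩ := abs_le.1 (abs_re_gowersAvg_le_one (s := s) (N := N) hf')
  obtain ⟨hD1, hD2⟩ := abs_le.1 (abs_re_simplexAvg_le_one (s := s) (N := N) hf')
  exact two_sided_bound_of_comparable gowersNorm_pow_of_nonneg gowersNorm_pow_of_neg hc0 hy
    (by linarith) (by linarith) (one_sub_re_simplexAvg_le hf' hN) (one_sub_re_gowersAvg_le hf' hN)
    (by linarith) hKC ((le_max_right _ _).trans (le_max_left _ _))
    (by rw [← div_le_iff₀' (by linarith)]; exact le_max_right _ _)
end

section
/- Let q ≥ 2 and d ≥ 1 be integers, c > 0 and A > 0, and let f : ℕ → ℂ be a q-multiplicative sequence with |f(n)| = 1 for all n. Suppose that for every integer L ≥ 0 and every real polynomial p of degree at most d, |(1/q^L)·∑_{n=0}^{q^L−1} f(n) e(p(n))| ≤ A·q^{−cL}. Then there exists a constant C > 0 (depending only on q, d, c, A) such that for every integer M ≥ 0, every integer N ≥ 1, and every real polynomial p of degree at most d, |(1/N)·∑_{n=0}^{N−1} f(n+M) e(p(n))| ≤ C·N^{−c}. -/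
/-!
If `c ≥ 1` the hypothesis cannot hold: by Parseval for the linear phases `k n / q^L`, some
sum over `[0, q^L)` has size at least `q^(L/2)`, whereas the hypothesis bounds all of them by `A`.

For `c < 1` put `ρ = q^(1-c) > 1`, so that every sum over `[0, q^L)` is at most `A ρ^L`.
By `q`-multiplicativity a sum over an aligned block `[m q^L, (m+1) q^L)` has the same modulus
as a sum over `[0, q^L)` against the shifted polynomial, which has the same degree. An interval
of length `< q^(L+1)` ending at a multiple of `q^L` is cut, greedily from the right, into at most
`q - 1` aligned blocks of each length `q^j`, `j ≤ L`, and an arbitrary interval of length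
`N < q^(L+1)` is the difference of two such intervals with a common right end. Summing the
geometric series bounds the sum by a constant times `ρ^(log_q N) ≤ N^(1-c)`.
-/

open Finset Complex

open ComplexConjugate Polynomial

theorem IsPrimitiveRoot.sum_pow_mul_conj_pow {ζ : ℂ} {K : ℕ} (hζ : IsPrimitiveRoot ζ K)
    {n m : ℕ} (hn : n < K) (hm : m < K) :
    ∑ k ∈ range K, ζ ^ (k * n) * conj (ζ ^ (k * m)) = if n = m then (K : ℂ) else 0 := by
  have hζ0 : ζ ≠ 0 := hζ.ne_zero (by omega)
  have hconj : conj ζ = ζ⁻¹ := (inv_eq_conj (hζ.norm'_eq_one (by omega))).symm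
  have hw (k : ℕ) : ζ ^ (k * n) * conj (ζ ^ (k * m)) = (ζ ^ n / ζ ^ m) ^ k := by
    rw [map_pow, hconj, div_pow, inv_pow, div_eq_mul_inv, ← pow_mul, ← pow_mul, mul_comm n,
      mul_comm m]
  simp_rw [hw]
  split_ifs with hnm
  · simp [hnm, hζ0]
  · have hw1 : ζ ^ n / ζ ^ m ≠ 1 := fun h ↦
      hnm (hζ.pow_inj hn hm ((div_eq_one_iff_eq (pow_ne_zero m hζ0)).mp h))
    rw [geom_sum_eq hw1, div_pow, ← pow_mul, ← pow_mul, mul_comm n, mul_comm m, pow_mul, pow_mul,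
      hζ.pow_eq_one]
    simp

theorem IsPrimitiveRoot.sum_norm_sum_mul_pow_sq {ζ : ℂ} {K : ℕ} (hζ : IsPrimitiveRoot ζ K)
    (g : ℕ → ℂ) :
    ∑ k ∈ range K, ‖∑ n ∈ range K, g n * ζ ^ (k * n)‖ ^ 2 = K * ∑ n ∈ range K, ‖g n‖ ^ 2 := by
  apply ofReal_injective
  push_cast
  simp_rw [← mul_conj']
  calc ∑ k ∈ range K, (∑ n ∈ range K, g n * ζ ^ (k * n)) * conj (∑ m ∈ range K, g m * ζ ^ (k * m))
      = ∑ n ∈ range K, ∑ m ∈ range K,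
          g n * conj (g m) * ∑ k ∈ range K, ζ ^ (k * n) * conj (ζ ^ (k * m)) := by
        simp_rw [map_sum, map_mul, sum_mul_sum, mul_sum]
        rw [sum_comm]
        refine sum_congr rfl fun n _ ↦ ?_
        rw [sum_comm]
        refine sum_congr rfl fun m _ ↦ sum_congr rfl fun k _ ↦ by ring
    _ = ∑ n ∈ range K, g n * conj (g n) * K := by
        refine sum_congr rfl fun n hn ↦ ?_
        rw [sum_congr rfl fun m hm ↦ by
          rw [hζ.sum_pow_mul_conj_pow (mem_range.mp hn) (mem_range.mp hm)]]
        simp [hn]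
    _ = K * ∑ n ∈ range K, g n * conj (g n) := by rw [mul_sum]; simp_rw [mul_comm]

theorem dvd_add_mod_of_dvd_add {k M N : ℕ} (h : k ∣ M + N) : k ∣ M + N % k :=
  Nat.dvd_of_mod_eq_zero (by rw [Nat.add_mod_mod, Nat.mod_eq_zero_of_dvd h])

theorem e_nat_mul (m : ℕ) (x : ℝ) : e (m * x) = e x ^ m := by
  rw [e, e, ← Complex.exp_nat_mul]; push_cast; ring_nf

theorem isPrimitiveRoot_e_inv {K : ℕ} (hK : K ≠ 0) : IsPrimitiveRoot (e (K : ℝ)⁻¹) K := by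
  convert Complex.isPrimitiveRoot_exp K hK using 1
  rw [e]; push_cast; ring_nf

theorem exists_le_norm_sum_mul_e_sq {g : ℕ → ℂ} (hg : ∀ n, ‖g n‖ = 1) {K : ℕ} (hK : K ≠ 0) :
    ∃ k < K, (K : ℝ) ≤ ‖∑ n ∈ range K, g n * e (k / K * n)‖ ^ 2 := by
  have hphase (k n : ℕ) : e (k / K * n) = e (K : ℝ)⁻¹ ^ (k * n) := by
    rw [← e_nat_mul]; congr 1; push_cast; ring
  have hsum : ∑ _k ∈ range K, (K : ℝ) ≤
      ∑ k ∈ range K, ‖∑ n ∈ range K, g n * e (k / K * n)‖ ^ 2 := by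
    simp_rw [hphase, (isPrimitiveRoot_e_inv hK).sum_norm_sum_mul_pow_sq, hg]
    simp
  obtain ⟨k, hk, hle⟩ := exists_le_of_sum_le (nonempty_range_iff.mpr hK) hsum
  exact ⟨k, mem_range.mp hk, hle⟩

theorem norm_div_natCast_pow_le_iff {q : ℕ} (hq : 0 < q) (L : ℕ) (z : ℂ) (A c : ℝ) :
    ‖z / (q ^ L : ℕ)‖ ≤ A * (q : ℝ) ^ (-(c * L)) ↔ ‖z‖ ≤ A * ((q : ℝ) ^ (1 - c)) ^ L := by
  have hq' : (0 : ℝ) < q := Nat.cast_pos.mpr hq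
  have : A * (q : ℝ) ^ (-(c * L)) * (q ^ L : ℕ) = A * ((q : ℝ) ^ (1 - c)) ^ L := by
    rw [← Real.rpow_natCast, ← Real.rpow_mul hq'.le, Nat.cast_pow, ← Real.rpow_natCast,
      mul_assoc, ← Real.rpow_add hq']
    ring_nf
  rw [norm_div, Complex.norm_natCast, div_le_iff₀ (by positivity), this]

theorem exponent_lt_one {q d : ℕ} (hq : 2 ≤ q) (hd : 1 ≤ d) {c A : ℝ} {f : ℕ → ℂ}
    (hmod : ∀ n, ‖f n‖ = 1)
    (h : ∀ L : ℕ, ∀ p : ℝ[X], p.natDegree ≤ d →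
      ‖(∑ n ∈ range (q ^ L), f n * e (p.eval (n : ℝ))) / (q ^ L : ℕ)‖
        ≤ A * (q : ℝ) ^ (-(c * L))) : c < 1 := by
  by_contra! hc
  have hq1 : (1 : ℝ) < q := by exact_mod_cast hq
  obtain ⟨L, hL⟩ := pow_unbounded_of_one_lt (A ^ 2) hq1
  obtain ⟨k, -, hk⟩ := exists_le_norm_sum_mul_e_sq hmod (pow_ne_zero L (by omega : q ≠ 0))
  have hdeg : (C ((k : ℝ) / (q ^ L : ℕ)) * X).natDegree ≤ d :=
    (natDegree_C_mul_le _ _).trans (natDegree_X_le.trans hd)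
  have hS := (norm_div_natCast_pow_le_iff (by omega) L _ A c).mp (h L _ hdeg)
  simp only [eval_mul, eval_C, eval_X] at hS
  have hρ : ((q : ℝ) ^ (1 - c)) ^ L ≤ 1 :=
    pow_le_one₀ (by positivity) (Real.rpow_le_one_of_one_le_of_nonpos hq1.le (by linarith))
  push_cast at hk hS
  have hA : 0 ≤ A := nonneg_of_mul_nonneg_left ((norm_nonneg _).trans hS) (by positivity)
  have hSA := pow_le_pow_left₀ (norm_nonneg _) (hS.trans (mul_le_of_le_one_right hA hρ)) 2
  linarith

noncomputable def twistedSum (f : ℕ → ℂ) (p : ℝ[X]) (M N : ℕ) : ℂ :=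
  ∑ n ∈ range N, f (n + M) * e (p.eval (n : ℝ))

@[simp]
theorem twistedSum_zero (f : ℕ → ℂ) (p : ℝ[X]) (M : ℕ) : twistedSum f p M 0 = 0 := by
  simp [twistedSum]

theorem twistedSum_add (f : ℕ → ℂ) (p : ℝ[X]) (M N₁ N₂ : ℕ) :
    twistedSum f p M (N₁ + N₂) =
      twistedSum f p M N₁ + twistedSum f (taylor (N₁ : ℝ) p) (M + N₁) N₂ := by
  simp only [twistedSum, sum_range_add, taylor_eval]
  congr 1
  refine sum_congr rfl fun n _ ↦ ?_
  rw [show N₁ + n + M = n + (M + N₁) by ring]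
  push_cast
  ring_nf

section TwistedSum

variable {q d : ℕ} {f : ℕ → ℂ}

theorem QMult.twistedSum_pow_of_dvd (hf : QMult q f) (p : ℝ[X]) {L M : ℕ} (hM : q ^ L ∣ M) :
    twistedSum f p M (q ^ L) = f M * twistedSum f p 0 (q ^ L) := by
  rw [twistedSum, twistedSum, mul_sum]
  refine sum_congr rfl fun n hn ↦ ?_
  rw [hf L n M (mem_range.mp hn) hM, add_zero]
  ring

variable {B : ℕ → ℝ}

theorem norm_twistedSum_mul_pow_le (hf : QMult q f) (hmod : ∀ n, ‖f n‖ = 1)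
    (hB : ∀ L, ∀ p : ℝ[X], p.natDegree ≤ d → ‖twistedSum f p 0 (q ^ L)‖ ≤ B L)
    {L M : ℕ} (hM : q ^ L ∣ M) (t : ℕ) {p : ℝ[X]} (hp : p.natDegree ≤ d) :
    ‖twistedSum f p M (t * q ^ L)‖ ≤ t * B L := by
  induction t generalizing M p with
  | zero => simp
  | succ t ih =>
    rw [add_one_mul, add_comm, twistedSum_add, hf.twistedSum_pow_of_dvd p hM, Nat.cast_succ]
    refine (norm_add_le _ _).trans ?_
    rw [norm_mul, hmod, one_mul]
    linarith [hB L p hp, ih (dvd_add hM dvd_rfl) (p := taylor ((q ^ L : ℕ) : ℝ) p)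
      (by rwa [natDegree_taylor])]

theorem norm_twistedSum_le_mod_add (hf : QMult q f) (hmod : ∀ n, ‖f n‖ = 1)
    (hB : ∀ L, ∀ p : ℝ[X], p.natDegree ≤ d → ‖twistedSum f p 0 (q ^ L)‖ ≤ B L)
    {L M N : ℕ} (hdvd : q ^ L ∣ M + N) (hN : N < q ^ (L + 1)) {p : ℝ[X]}
    (hp : p.natDegree ≤ d) :
    ‖twistedSum f p M N‖ ≤ ‖twistedSum f p M (N % q ^ L)‖ + (q - 1) * B L := by
  have ht : N / q ^ L + 1 ≤ q := Nat.div_lt_of_lt_mul (by rwa [pow_succ] at hN)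
  have hr : q ^ L ∣ M + N % q ^ L := dvd_add_mod_of_dvd_add hdvd
  have hBL : 0 ≤ B L := (norm_nonneg _).trans (hB L 0 (by simp))
  conv_lhs => rw [← Nat.mod_add_div' N (q ^ L), twistedSum_add]
  refine (norm_add_le _ _).trans (add_le_add le_rfl ?_)
  refine (norm_twistedSum_mul_pow_le hf hmod hB hr _ (by rwa [natDegree_taylor])).trans ?_
  gcongr
  linarith [(by exact_mod_cast ht : ((N / q ^ L : ℕ) : ℝ) + 1 ≤ q)]

theorem norm_twistedSum_le_of_dvd (hf : QMult q f) (hmod : ∀ n, ‖f n‖ = 1)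
    (hB : ∀ L, ∀ p : ℝ[X], p.natDegree ≤ d → ‖twistedSum f p 0 (q ^ L)‖ ≤ B L)
    (L : ℕ) {M N : ℕ} (hdvd : q ^ L ∣ M + N) (hN : N < q ^ (L + 1)) {p : ℝ[X]}
    (hp : p.natDegree ≤ d) :
    ‖twistedSum f p M N‖ ≤ (q - 1) * ∑ j ∈ range (L + 1), B j := by
  induction L generalizing M N with
  | zero =>
    have := norm_twistedSum_le_mod_add hf hmod hB hdvd hN hp
    rw [pow_zero, Nat.mod_one, twistedSum_zero, norm_zero, zero_add] at this
    simpa using this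
  | succ L ih =>
    have hq : q ≠ 0 := by rintro rfl; simp at hN
    have hr : q ^ L ∣ M + N % q ^ (L + 1) :=
      (pow_dvd_pow q L.le_succ).trans (dvd_add_mod_of_dvd_add hdvd)
    calc ‖twistedSum f p M N‖
        ≤ ‖twistedSum f p M (N % q ^ (L + 1))‖ + (q - 1) * B (L + 1) :=
          norm_twistedSum_le_mod_add hf hmod hB hdvd hN hp
      _ ≤ (q - 1) * ∑ j ∈ range (L + 1), B j + (q - 1) * B (L + 1) := by
          gcongr
          exact ih hr (Nat.mod_lt _ (by positivity))
      _ = (q - 1) * ∑ j ∈ range (L + 2), B j := by rw [sum_range_succ _ (L + 1), mul_add]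

theorem norm_twistedSum_le (hf : QMult q f) (hmod : ∀ n, ‖f n‖ = 1)
    (hB : ∀ L, ∀ p : ℝ[X], p.natDegree ≤ d → ‖twistedSum f p 0 (q ^ L)‖ ≤ B L)
    (hq : 2 ≤ q) {L M N : ℕ} (hN : N < q ^ (L + 1)) {p : ℝ[X]} (hp : p.natDegree ≤ d) :
    ‖twistedSum f p M N‖ ≤ 2 * ((q - 1) * ∑ j ∈ range (L + 2), B j) := by
  set Q := q ^ (L + 1)
  have hQ : 2 * Q ≤ q ^ (L + 1 + 1) := by
    rw [pow_succ, mul_comm 2]; exact Nat.mul_le_mul_left Q hq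
  -- `X - X % Q` is the least multiple of `Q` that is at least `M + N`.
  set X := M + N + (Q - 1)
  have hXQ := Nat.mod_lt X (by omega : 0 < Q)
  have hX := Nat.mod_le X Q
  obtain ⟨N', hN'⟩ : ∃ N', M + N + N' = X - X % Q := ⟨X - X % Q - (M + N), by omega⟩
  have hE : Q ∣ M + N + N' := hN' ▸ Nat.dvd_sub_mod X
  have h₁ := norm_twistedSum_le_of_dvd hf hmod hB (L + 1) (M := M) (N := N + N')
    (by rwa [← add_assoc]) (by omega) hp
  have h₂ := norm_twistedSum_le_of_dvd hf hmod hB (L + 1) (M := M + N) (N := N')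
    hE (by omega) (p := taylor (N : ℝ) p) (by rwa [natDegree_taylor])
  calc ‖twistedSum f p M N‖
      = ‖twistedSum f p M (N + N') - twistedSum f (taylor (N : ℝ) p) (M + N) N'‖ := by
        rw [twistedSum_add, add_sub_cancel_right]
    _ ≤ ‖twistedSum f p M (N + N')‖ + ‖twistedSum f (taylor (N : ℝ) p) (M + N) N'‖ :=
        norm_sub_le _ _
    _ ≤ 2 * ((q - 1) * ∑ j ∈ range (L + 2), B j) := by linarith

end TwistedSum

theorem norm_twistedSum_le_mul_pow_log {q d : ℕ} {f : ℕ → ℂ} (hf : QMult q f)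
    (hmod : ∀ n, ‖f n‖ = 1) {A ρ : ℝ} (hρ : 1 < ρ)
    (hB : ∀ L, ∀ p : ℝ[X], p.natDegree ≤ d → ‖twistedSum f p 0 (q ^ L)‖ ≤ A * ρ ^ L)
    (hq : 2 ≤ q) (M N : ℕ) {p : ℝ[X]} (hp : p.natDegree ≤ d) :
    ‖twistedSum f p M N‖ ≤ 2 * (q - 1) * A * ρ ^ 2 / (ρ - 1) * ρ ^ Nat.log q N := by
  set L := Nat.log q N
  have hA : 0 ≤ A := by simpa using (norm_nonneg _).trans (hB 0 0 (by simp))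
  have hq1 : (1 : ℝ) ≤ q := by exact_mod_cast (by omega : 1 ≤ q)
  have hgeom : ∑ j ∈ range (L + 2), A * ρ ^ j ≤ A * ρ ^ 2 / (ρ - 1) * ρ ^ L := by
    rw [← mul_sum, geom_sum_eq hρ.ne']
    calc A * ((ρ ^ (L + 2) - 1) / (ρ - 1)) ≤ A * (ρ ^ (L + 2) / (ρ - 1)) := by
          gcongr; linarith
      _ = A * ρ ^ 2 / (ρ - 1) * ρ ^ L := by ring
  calc ‖twistedSum f p M N‖
      ≤ 2 * ((q - 1) * ∑ j ∈ range (L + 2), A * ρ ^ j) :=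
        norm_twistedSum_le hf hmod hB hq (Nat.lt_pow_succ_log_self (by omega) N) hp
    _ ≤ 2 * ((q - 1) * (A * ρ ^ 2 / (ρ - 1) * ρ ^ L)) := by gcongr
    _ = 2 * (q - 1) * A * ρ ^ 2 / (ρ - 1) * ρ ^ L := by ring

theorem rpow_pow_log_le {q N : ℕ} (hN : N ≠ 0) {s : ℝ} (hs : 0 ≤ s) :
    ((q : ℝ) ^ s) ^ Nat.log q N ≤ (N : ℝ) ^ s := by
  rw [← Real.rpow_natCast, ← Real.rpow_mul (Nat.cast_nonneg q), mul_comm,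
    Real.rpow_mul (Nat.cast_nonneg q), Real.rpow_natCast]
  exact Real.rpow_le_rpow (by positivity) (by exact_mod_cast Nat.pow_log_le_self q hN) hs

theorem stmt17_general (q d : ℕ) (hq : 2 ≤ q) (hd : 1 ≤ d) (c A : ℝ) (hA : 0 < A)
    (f : ℕ → ℂ) (hf : QMult q f) (hmod : ∀ n, ‖f n‖ = 1)
    (h : ∀ L : ℕ, ∀ p : Polynomial ℝ, p.natDegree ≤ d →
      ‖(∑ n ∈ Finset.range (q ^ L), f n * e (p.eval (n : ℝ))) / (q ^ L : ℕ)‖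
        ≤ A * (q : ℝ) ^ (-(c * L))) :
    ∃ C > (0 : ℝ), ∀ M N : ℕ, 1 ≤ N → ∀ p : Polynomial ℝ, p.natDegree ≤ d →
      ‖(∑ n ∈ Finset.range N, f (n + M) * e (p.eval (n : ℝ))) / N‖
        ≤ C * (N : ℝ) ^ (-c) := by
  have hc : c < 1 := exponent_lt_one hq hd hmod h
  set ρ := (q : ℝ) ^ (1 - c)
  have hρ : 1 < ρ := Real.one_lt_rpow (by exact_mod_cast hq) (by linarith)
  have hB (L : ℕ) (p : ℝ[X]) (hp : p.natDegree ≤ d) : ‖twistedSum f p 0 (q ^ L)‖ ≤ A * ρ ^ L :=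
    (norm_div_natCast_pow_le_iff (by omega) L _ A c).mp (h L p hp)
  have hq1 : (0 : ℝ) < q - 1 := by
    have : (2 : ℝ) ≤ q := by exact_mod_cast hq
    linarith
  set C := 2 * (q - 1) * A * ρ ^ 2 / (ρ - 1)
  have hC : 0 < C := div_pos (by positivity) (sub_pos.2 hρ)
  refine ⟨C, hC, fun M N hN p hp ↦ ?_⟩
  have hN' : (0 : ℝ) < N := by exact_mod_cast hN
  calc ‖(∑ n ∈ range N, f (n + M) * e (p.eval (n : ℝ))) / N‖
      = ‖twistedSum f p M N‖ / N := by rw [norm_div, norm_natCast]; rfl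
    _ ≤ C * ρ ^ Nat.log q N / N := by
        gcongr; exact norm_twistedSum_le_mul_pow_log hf hmod hρ hB hq M N hp
    _ ≤ C * (N : ℝ) ^ (1 - c) / N := by
        gcongr; exact rpow_pow_log_le (by omega) (by linarith)
    _ = C * (N : ℝ) ^ (-c) := by
        rw [sub_eq_neg_add, Real.rpow_add_one hN'.ne', mul_div_assoc,
          mul_div_cancel_right₀ _ hN'.ne']

/-- If a `q`-multiplicative sequence satisfies a power-saving bound
against degree-`d` polynomial phases on `q`-adic intervals `[0, q^L)`, then it
satisfies such a bound on all shifted intervals `[M, M+N)`. -/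
theorem stmt17 (q d : ℕ) (hq : 2 ≤ q) (hd : 1 ≤ d) (c A : ℝ) (hc : 0 < c) (hA : 0 < A)
    (f : ℕ → ℂ) (hf : QMult q f) (hmod : ∀ n, ‖f n‖ = 1)
    (h : ∀ L : ℕ, ∀ p : Polynomial ℝ, p.natDegree ≤ d →
      ‖(∑ n ∈ Finset.range (q ^ L), f n * e (p.eval (n : ℝ))) / (q ^ L : ℕ)‖
        ≤ A * (q : ℝ) ^ (-(c * L))) :
    ∃ C > (0 : ℝ), ∀ M N : ℕ, 1 ≤ N → ∀ p : Polynomial ℝ, p.natDegree ≤ d →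
      ‖(∑ n ∈ Finset.range N, f (n + M) * e (p.eval (n : ℝ))) / N‖
        ≤ C * (N : ℝ) ^ (-c) :=
  stmt17_general q d hq hd c A hA f hf hmod h
end

section
/- For every integer q ≥ 2 there exists a constant C > 0 such that for every q-multiplicative sequence f : ℕ → ℂ with |f(n)| = 1 for all n, and every integer r ≥ 1, the limit γ_r := lim_{N→∞} (1/N)·∑_{n=0}^{N−1} f(n+r)·conj(f(n)) exists, and for every integer N ≥ 2, |(1/N)·∑_{n=0}^{N−1} f(n+r)·conj(f(n)) − γ_r| ≤ C·r·(log N)/N. -/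
open Finset Complex

/-!
Write `S N = ∑_{n<N} f (n + r) * conj (f n)`. If `q ^ t ∣ M` and `u + r < q ^ t`, then
`q`-multiplicativity gives `f (M + u) = f u * f M` and `f (M + u + r) = f (u + r) * f M`, and
`|f M| = 1` makes the summands at `M + u` and at `u` equal. Hence `S (M + L) = S M + S L + O(r)`
whenever `L ≤ q ^ t`. With `M = d * q ^ t` this gives `S (q ^ (t+1)) = q * S (q ^ t) + O(q r)`,
so `S (q ^ t) / q ^ t` converges geometrically to some `γ` with `S (q ^ t) = q ^ t * γ + O(r)`.
Peeling off the base-`q` digits of `N` one at a time then yields `S N = N * γ + O(q r log N)`.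
-/

open ComplexConjugate

def autocorrSum (f : ℕ → ℂ) (r N : ℕ) : ℂ :=
  ∑ n ∈ range N, f (n + r) * conj (f n)

@[simp]
lemma autocorrSum_zero (f : ℕ → ℂ) (r : ℕ) : autocorrSum f r 0 = 0 := by
  simp [autocorrSum]

lemma autocorrSum_add (f : ℕ → ℂ) (r M L : ℕ) :
    autocorrSum f r (M + L) =
      autocorrSum f r M + ∑ u ∈ range L, f (M + u + r) * conj (f (M + u)) := by
  simp only [autocorrSum, sum_range_add]

lemma norm_mul_conj_sub_mul_conj_le {f : ℕ → ℂ} (hf1 : ∀ n, ‖f n‖ = 1) (a b c d : ℕ) :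
    ‖f a * conj (f b) - f c * conj (f d)‖ ≤ 2 := by
  refine (norm_sub_le _ _).trans ?_
  simp only [norm_mul, norm_conj, hf1]
  norm_num

namespace QMult

variable {q : ℕ} {f : ℕ → ℂ}

lemma mul_conj_add_eq (hf : QMult q f) (hf1 : ∀ n, ‖f n‖ = 1) {t M u r : ℕ}
    (hM : q ^ t ∣ M) (hu : u + r < q ^ t) :
    f (M + u + r) * conj (f (M + u)) = f (u + r) * conj (f u) := by
  have hshift : ∀ v < q ^ t, f (M + v) = f v * f M := fun v hv => by
    rw [add_comm]; exact hf t v M hv hM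
  have hunit : f M * conj (f M) = 1 := by
    rw [mul_conj', hf1, ofReal_one, one_pow]
  rw [add_assoc, hshift _ hu, hshift _ (by omega), map_mul]
  linear_combination f (u + r) * conj (f u) * hunit

/-- Only the at most `r` indices `u` with `u + r ≥ q ^ t` see the carry into the block of `M`. -/
lemma norm_autocorrSum_add_sub_le (hf : QMult q f) (hf1 : ∀ n, ‖f n‖ = 1) {t M L : ℕ}
    (r : ℕ) (hM : q ^ t ∣ M) (hL : L ≤ q ^ t) :
    ‖autocorrSum f r (M + L) - autocorrSum f r M - autocorrSum f r L‖ ≤ 2 * r := by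
  have hdiff : autocorrSum f r (M + L) - autocorrSum f r M - autocorrSum f r L =
      ∑ u ∈ range L with q ^ t ≤ u + r,
        (f (M + u + r) * conj (f (M + u)) - f (u + r) * conj (f u)) := by
    rw [sum_filter_of_ne, sum_sub_distrib, autocorrSum_add, add_sub_cancel_left]
    · rfl
    · intro u _ hne
      by_contra hlt
      exact hne (sub_eq_zero.2 (mul_conj_add_eq hf hf1 hM (not_le.1 hlt)))
  have hcard : #{u ∈ range L | q ^ t ≤ u + r} ≤ r := by
    calc #{u ∈ range L | q ^ t ≤ u + r} ≤ #(Ico (q ^ t - r) (q ^ t)) := by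
          refine card_le_card fun u hu => ?_
          simp only [mem_filter, mem_range] at hu
          simp only [mem_Ico]
          omega
      _ ≤ r := by rw [Nat.card_Ico]; omega
  rw [hdiff]
  calc _ ≤ ∑ _u ∈ range L with q ^ t ≤ _u + r, (2 : ℝ) :=
        norm_sum_le_of_le _ fun _ _ => norm_mul_conj_sub_mul_conj_le hf1 _ _ _ _
    _ = 2 * #{u ∈ range L | q ^ t ≤ u + r} := by rw [sum_const, nsmul_eq_mul, mul_comm]
    _ ≤ 2 * r := by gcongr

lemma norm_autocorrSum_mul_pow_sub_le (hf : QMult q f) (hf1 : ∀ n, ‖f n‖ = 1)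
    (r t d : ℕ) :
    ‖autocorrSum f r (d * q ^ t) - d * autocorrSum f r (q ^ t)‖ ≤ 2 * r * d := by
  induction d with
  | zero => simp
  | succ d ih =>
    have hblock := hf.norm_autocorrSum_add_sub_le hf1 r (dvd_mul_left (q ^ t) d) le_rfl
    rw [← add_one_mul] at hblock
    have hsplit : autocorrSum f r ((d + 1) * q ^ t) - ↑(d + 1) * autocorrSum f r (q ^ t) =
        (autocorrSum f r ((d + 1) * q ^ t) - autocorrSum f r (d * q ^ t)
            - autocorrSum f r (q ^ t))
          + (autocorrSum f r (d * q ^ t) - d * autocorrSum f r (q ^ t)) := by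
      push_cast; ring
    rw [hsplit]
    exact (norm_add_le_of_le hblock ih).trans_eq (by push_cast; ring)

lemma exists_norm_autocorrSum_pow_sub_le (hf : QMult q f) (hf1 : ∀ n, ‖f n‖ = 1)
    (hq : 2 ≤ q) (r : ℕ) :
    ∃ γ : ℂ, ∀ t, ‖autocorrSum f r (q ^ t) - q ^ t * γ‖ ≤ 4 * r := by
  have hq0 : (0 : ℝ) < q := by positivity
  have hqC : (q : ℂ) ≠ 0 := by exact_mod_cast hq0.ne'
  have hqinv : (q : ℝ)⁻¹ ≤ 2⁻¹ := inv_anti₀ two_pos (by exact_mod_cast hq)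
  set c : ℕ → ℂ := fun t => autocorrSum f r (q ^ t) / q ^ t
  have hstep : ∀ t, dist (c t) (c (t + 1)) ≤ 2 * r * (q : ℝ)⁻¹ ^ t := fun t => by
    have hmul := hf.norm_autocorrSum_mul_pow_sub_le hf1 r t q
    rw [← pow_succ'] at hmul
    have hdiff : c t - c (t + 1) =
        -(autocorrSum f r (q ^ (t + 1)) - q * autocorrSum f r (q ^ t)) / (q : ℂ) ^ (t + 1) := by
      simp only [c]; field_simp; ring
    rw [dist_eq, hdiff, norm_div, norm_neg, norm_pow, Complex.norm_natCast,
      div_le_iff₀ (by positivity)]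
    calc _ ≤ (2 * r * q : ℝ) := hmul
      _ = _ := by rw [inv_pow]; field_simp; ring
  obtain ⟨γ, hγ⟩ := cauchySeq_tendsto_of_complete
    (cauchySeq_of_le_geometric _ _ (by linarith) hstep)
  refine ⟨γ, fun t => ?_⟩
  have hdist := dist_le_of_le_geometric_of_tendsto _ _ (by linarith) hstep hγ t
  have hscale : autocorrSum f r (q ^ t) - q ^ t * γ = (q : ℂ) ^ t * (c t - γ) := by
    simp only [c]; field_simp
  rw [hscale, norm_mul, norm_pow, Complex.norm_natCast, ← dist_eq]
  calc (q : ℝ) ^ t * dist (c t) γ ≤ q ^ t * (2 * r * (q : ℝ)⁻¹ ^ t / (1 - (q : ℝ)⁻¹)) := by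
        gcongr
    _ = 2 * r / (1 - (q : ℝ)⁻¹) := by rw [inv_pow]; field_simp
    _ ≤ 2 * r / 2⁻¹ := by gcongr; linarith
    _ = 4 * r := by ring

lemma norm_autocorrSum_sub_le_of_lt_pow (hf : QMult q f) (hf1 : ∀ n, ‖f n‖ = 1) (hq : 0 < q)
    {r : ℕ} {γ : ℂ} (hγ : ∀ t, ‖autocorrSum f r (q ^ t) - q ^ t * γ‖ ≤ 4 * r) (t : ℕ) :
    ∀ N < q ^ t, ‖autocorrSum f r N - N * γ‖ ≤ 6 * q * r * t := by
  induction t with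
  | zero => intro N hN; simp [Nat.lt_one_iff.1 (by simpa using hN)]
  | succ t ih =>
    intro N hN
    obtain ⟨d, N', hd, hN', rfl⟩ : ∃ d N', d < q ∧ N' < q ^ t ∧ N = d * q ^ t + N' :=
      ⟨N / q ^ t, N % q ^ t, (Nat.div_lt_iff_lt_mul (by positivity)).2 (by rwa [← pow_succ']),
        Nat.mod_lt N (by positivity), (Nat.div_add_mod' N (q ^ t)).symm⟩
    have hdq : (d : ℝ) + 1 ≤ q := by exact_mod_cast hd
    have hsplit : autocorrSum f r (d * q ^ t + N') - ↑(d * q ^ t + N') * γ =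
        (autocorrSum f r (d * q ^ t + N') - autocorrSum f r (d * q ^ t) - autocorrSum f r N')
          + (autocorrSum f r (d * q ^ t) - d * autocorrSum f r (q ^ t))
          + d * (autocorrSum f r (q ^ t) - q ^ t * γ)
          + (autocorrSum f r N' - N' * γ) := by
      push_cast; ring
    rw [hsplit]
    refine norm_add₄_le.trans ?_
    rw [norm_mul, Complex.norm_natCast]
    have hcarry := hf.norm_autocorrSum_add_sub_le hf1 r (dvd_mul_left (q ^ t) d) hN'.le
    have hlead := hf.norm_autocorrSum_mul_pow_sub_le hf1 r t d
    have hpow := mul_le_mul_of_nonneg_left (hγ t) d.cast_nonneg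
    have hrest := ih N' hN'
    push_cast
    nlinarith [r.cast_nonneg (α := ℝ)]

end QMult

lemma nat_log_add_one_le_two_mul_log_div_log_two {q N : ℕ} (hq : 2 ≤ q) (hN : 2 ≤ N) :
    (Nat.log q N + 1 : ℝ) ≤ 2 * Real.log N / Real.log 2 := by
  have hlog2 : 0 < Real.log 2 := Real.log_pos one_lt_two
  have hlogN : Real.log 2 ≤ Real.log N := Real.log_le_log two_pos (by exact_mod_cast hN)
  have hpow : (2 : ℝ) ^ Nat.log q N ≤ N := by
    exact_mod_cast (Nat.pow_le_pow_left hq _).trans (Nat.pow_log_le_self q (by omega))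
  have hlog := Real.log_le_log (by positivity) hpow
  rw [Real.log_pow] at hlog
  rw [le_div_iff₀ hlog2]
  linarith

/-- The autocorrelation coefficients `γ_r` of a `q`-multiplicative
sequence exist, with rate of convergence `O(r log N / N)`. -/
theorem stmt18 (q : ℕ) (hq : 2 ≤ q) :
    ∃ C > (0 : ℝ), ∀ f : ℕ → ℂ, QMult q f → (∀ n, ‖f n‖ = 1) →
      ∀ r : ℕ, 1 ≤ r → ∃ γ : ℂ,
        Filter.Tendsto
          (fun N : ℕ => (∑ n ∈ Finset.range N, f (n + r) * (starRingEnd ℂ) (f n)) / N)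
          Filter.atTop (nhds γ) ∧
        ∀ N : ℕ, 2 ≤ N →
          ‖(∑ n ∈ Finset.range N, f (n + r) * (starRingEnd ℂ) (f n)) / N - γ‖
            ≤ C * r * Real.log N / N := by
  have hlog2 : 0 < Real.log 2 := Real.log_pos one_lt_two
  set C : ℝ := 12 * q / Real.log 2
  refine ⟨C, by positivity, fun f hf hf1 r _ => ?_⟩
  obtain ⟨γ, hγ⟩ := hf.exists_norm_autocorrSum_pow_sub_le hf1 hq r
  have hbound : ∀ N : ℕ, 2 ≤ N → ‖autocorrSum f r N / N - γ‖ ≤ C * r * Real.log N / N := by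
    intro N hN
    have hE := hf.norm_autocorrSum_sub_le_of_lt_pow hf1 (by omega) hγ _ N
      (Nat.lt_pow_succ_log_self (by omega) N)
    have hNC : (N : ℂ) ≠ 0 := by exact_mod_cast (by omega : N ≠ 0)
    rw [div_sub' hNC, norm_div, Complex.norm_natCast]
    gcongr
    calc _ ≤ 6 * q * r * (Nat.log q N + 1 : ℝ) := by exact_mod_cast hE
      _ ≤ 6 * q * r * (2 * Real.log N / Real.log 2) := by
        gcongr; exact nat_log_add_one_le_two_mul_log_div_log_two hq hN
      _ = C * r * Real.log N := by simp only [C]; field_simp; ring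
  have hrate : Filter.Tendsto (fun N : ℕ => C * r * Real.log N / N) Filter.atTop (nhds 0) := by
    simpa [mul_div_assoc] using ((Real.isLittleO_log_id_atTop.tendsto_div_nhds_zero).comp
      tendsto_natCast_atTop_atTop).const_mul (C * r)
  refine ⟨γ, ?_, hbound⟩
  rw [tendsto_iff_norm_sub_tendsto_zero]
  exact squeeze_zero' (.of_forall fun _ => norm_nonneg _)
    (Filter.eventually_atTop.2 ⟨2, hbound⟩) hrate
end
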